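/- arXiv:2508.00431 — 6 statements merged into one kernel-verified Lean document; each statement's English description precedes it below -/
import Mathlib

section
/- Let A be an associative ℂ-algebra, not necessarily unital. Let e ∈ A be a primitive idempotent such that dim_ℂ eAe < ∞. Then Ae has a maximal proper left A-submodule (a left A-submodule K ⊊ Ae such that the only left A-submodules L with K ⊆ L ⊆ Ae are K and Ae), and any two maximal proper left A-submodules of Ae are equal. -/
open scoped BigOperators

universe u v

section BasicDefs

variable (R : Type u)

section MulOnly
variable [NonUnitalRing R]

/-- An idempotent element. -/
def IsIdem (e : R) : Prop := e * e = e

/-- Two idempotents are orthogonal. -/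
def OrthIdem (e f : R) : Prop := e * f = 0 ∧ f * e = 0

/-- `f ≤ e` for idempotents: `f * e = f` and `e * f = f`. -/
def SubIdem (f e : R) : Prop := f * e = f ∧ e * f = f

/-- A primitive idempotent. -/
def IsPrimIdem (e : R) : Prop :=
  IsIdem R e ∧ e ≠ 0 ∧ ∀ f : R, IsIdem R f → SubIdem R f e → f = 0 ∨ f = e

/-- Equivalence of idempotents: partial isometries `u ∈ eRf`, `v ∈ fRe` with
`u * v = e`, `v * u = f`. -/
def IdemEquiv (e f : R) : Prop :=
  ∃ u v : R, e * u * f = u ∧ f * v * e = v ∧ u * v = e ∧ v * u = f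

/-- A generating idempotent: it has a finite orthogonal primitive decomposition
    such that every primitive idempotent is equivalent to a member of it. -/
def IsGenIdem (e : R) : Prop :=
  IsIdem R e ∧ ∃ (n : ℕ) (ε : Fin n → R),
    (∀ k, IsPrimIdem R (ε k)) ∧ (∀ k l, k ≠ l → OrthIdem R (ε k) (ε l)) ∧
    e = ∑ k, ε k ∧ ∀ p : R, IsPrimIdem R p → ∃ k, IdemEquiv R p (ε k)

/-- An idempotent of the corner algebra `fRf`. -/
def IsIdemIn (f e : R) : Prop := IsIdem R e ∧ f * e * f = e

/-- A primitive idempotent of the corner algebra `fRf`. -/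
def IsPrimIdemIn (f e : R) : Prop :=
  IsIdemIn R f e ∧ e ≠ 0 ∧ ∀ g : R, IsIdemIn R f g → SubIdem R g e → g = 0 ∨ g = e

/-- Equivalence of idempotents within the corner algebra `fRf`. -/
def IdemEquivIn (f p q : R) : Prop :=
  ∃ u v : R, f * u * f = u ∧ f * v * f = v ∧ p * u * q = u ∧ q * v * p = v ∧
    u * v = p ∧ v * u = q

/-- A generating idempotent of the corner algebra `fRf`. -/
def IsGenIdemIn (f e : R) : Prop :=
  IsIdemIn R f e ∧ ∃ (n : ℕ) (ε : Fin n → R),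
    (∀ k, IsPrimIdemIn R f (ε k)) ∧ (∀ k l, k ≠ l → OrthIdem R (ε k) (ε l)) ∧
    e = ∑ k, ε k ∧ ∀ p : R, IsPrimIdemIn R f p → ∃ k, IdemEquivIn R f p (ε k)

end MulOnly

section Subspaces
variable [NonUnitalRing R] [Module ℂ R] [SMulCommClass ℂ R R] [IsScalarTower ℂ R R]

/-- The subspace `Re = {x | x * e = x}`. -/
def subAe (e : R) : Submodule ℂ R where
  carrier := {x | x * e = x}
  add_mem' := by
    intro a b ha hb
    simp only [Set.mem_setOf_eq] at *
    rw [add_mul, ha, hb]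
  zero_mem' := by simp
  smul_mem' := by
    intro c x hx
    simp only [Set.mem_setOf_eq] at *
    rw [smul_mul_assoc, hx]

/-- The corner subspace `eRf = {x | e * x * f = x}`. -/
def subCorner (e f : R) : Submodule ℂ R where
  carrier := {x | e * x * f = x}
  add_mem' := by
    intro a b ha hb
    simp only [Set.mem_setOf_eq] at *
    rw [mul_add, add_mul, ha, hb]
  zero_mem' := by simp
  smul_mem' := by
    intro c x hx
    simp only [Set.mem_setOf_eq] at *
    rw [mul_smul_comm, smul_mul_assoc, hx]

/-- A symmetric linear functional. -/
def IsSLF (ψ : R →ₗ[ℂ] ℂ) : Prop := ∀ x y : R, ψ (x * y) = ψ (y * x)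

/-- Witness data for an AUF algebra: a family of pairwise orthogonal idempotents with
finite-dimensional corners spanning the algebra. -/
def IsAUFWitness {I : Type v} (E : I → R) : Prop :=
  (∀ i, IsIdem R (E i)) ∧ (∀ i j, i ≠ j → OrthIdem R (E i) (E j)) ∧
  (∀ i j, FiniteDimensional ℂ (subCorner R (E i) (E j))) ∧
  (⨆ i, ⨆ j, subCorner R (E i) (E j)) = ⊤

/-- An almost unital and finite-dimensional (AUF) algebra. -/
def IsAUF : Prop := ∃ (I : Type u) (E : I → R), IsAUFWitness R E

end Subspaces

end BasicDefs

section Stmt4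
variable {A : Type u} [NonUnitalRing A] [Module ℂ A] [SMulCommClass ℂ A A] [IsScalarTower ℂ A A]

/-- `K` is a maximal proper left `A`-submodule of `Ae`. -/
def IsMaxProperSubmodOfAe (e : A) (K : Submodule ℂ A) : Prop :=
  K ≤ subAe A e ∧ (∀ a : A, ∀ x ∈ K, a * x ∈ K) ∧ K ≠ subAe A e ∧
  ∀ L : Submodule ℂ A, L ≤ subAe A e → (∀ a : A, ∀ x ∈ L, a * x ∈ L) →
    K ≤ L → L = K ∨ L = subAe A e

/-! The corner `eAe` is a finite-dimensional unital algebra whose only idempotents are `0` and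
`e`, so by Fitting's lemma each of its elements is nilpotent or a unit: `eAe` is a local ring.
Let `K` consist of the `x ∈ Ae` with `e a x` a non-unit of `eAe` for every `a ∈ A`. Since the
non-units of a local ring are closed under addition, `K` is a left submodule of `Ae`; it misses
`e`. A left submodule `L ⊆ Ae` containing some `x ∉ K` contains `v e a x = e` for suitable
`a, v`, hence all of `Ae`. So `K` is the largest proper left submodule of `Ae`. -/

theorem IsCompl.exists_isIdempotentElem {R : Type*} [Ring R] {I J : Ideal R} (h : IsCompl I J) :
    ∃ f ∈ J, IsIdempotentElem f ∧ 1 - f ∈ I := by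
  obtain ⟨g, hg, f, hf, hgf⟩ :=
    Submodule.mem_sup.mp (h.sup_eq_top ▸ Submodule.mem_top (x := (1 : R)))
  obtain rfl : g = 1 - f := eq_sub_of_add_eq hgf
  have hI : f - f * f ∈ I := by
    rw [show f - f * f = f * (1 - f) by rw [mul_sub, mul_one]]
    exact I.mul_mem_left f hg
  have hJ : f - f * f ∈ J := J.sub_mem hf (J.mul_mem_left f hf)
  exact ⟨f, hf, (sub_eq_zero.mp (h.disjoint.le_bot ⟨hI, hJ⟩)).symm, hg⟩

/-- Fitting's lemma, applied to right multiplication by `u`. -/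
theorem isNilpotent_or_isUnit_of_isIdempotentElem {R : Type*} [Ring R] [IsArtinianRing R]
    [IsNoetherianRing R] (h : ∀ f : R, IsIdempotentElem f → f = 0 ∨ f = 1) (u : R) :
    IsNilpotent u ∨ IsUnit u := by
  let φ := RingEquiv.moduleEndSelf R (.op u)
  obtain ⟨n, hn, hφ⟩ :=
    ((Filter.eventually_ne_atTop 0).and φ.eventually_isCompl_ker_pow_range_pow).exists
  obtain ⟨f, hf, hidem, hf'⟩ := hφ.exists_isIdempotentElem
  rcases h f hidem with rfl | rfl
  · refine .inl ⟨n, ?_⟩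
    rw [LinearMap.mem_ker, ← map_pow] at hf'
    simpa using hf'
  · have hrange := Ideal.eq_top_of_isUnit_mem _ hf isUnit_one
    have hbij : Function.Bijective ⇑(φ ^ n) := ⟨LinearMap.ker_eq_bot.mp
      (eq_bot_of_isCompl_top (hrange ▸ hφ)), LinearMap.range_eq_top.mp hrange⟩
    have := (isUnit_pow_iff hn).mp ((Module.End.isUnit_iff _).mpr hbij)
    exact .inr (isUnit_op.mp ((MulEquiv.isUnit_map (RingEquiv.moduleEndSelf R)).mp this))

theorem IsLocalRing.of_isIdempotentElem {R : Type*} [Ring R] [Nontrivial R] [IsArtinianRing R]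
    [IsNoetherianRing R] (h : ∀ f : R, IsIdempotentElem f → f = 0 ∨ f = 1) : IsLocalRing R :=
  of_isUnit_or_isUnit_one_sub_self fun u =>
    (isNilpotent_or_isUnit_of_isIdempotentElem h u).elim (.inr ·.isUnit_one_sub) .inl

namespace IsIdempotentElem

variable {R S : Type*} [CommSemiring R] [NonUnitalRing S] [Module R S] [SMulCommClass R S S]
  [IsScalarTower R S S] {e : S} (he : IsIdempotentElem e)

theorem smul_mem_corner (c : R) {x : S} (hx : x ∈ Subsemigroup.corner e) :
    c • x ∈ Subsemigroup.corner e := by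
  obtain ⟨r, rfl⟩ := hx
  exact ⟨c • r, by simp only [mul_smul_comm, smul_mul_assoc]⟩

instance : SMul R he.Corner := ⟨fun c x => ⟨c • x.1, smul_mem_corner c x.2⟩⟩

def Corner.subtype : he.Corner →ₙ+* S where
  toFun := Subtype.val
  map_zero' := rfl
  map_add' _ _ := rfl
  map_mul' _ _ := rfl

instance : Module R he.Corner :=
  Subtype.val_injective.module R (Corner.subtype he).toAddMonoidHom fun _ _ => rfl

instance : IsScalarTower R he.Corner he.Corner :=
  ⟨fun c x y => Subtype.ext (smul_mul_assoc c x.1 y.1)⟩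

def toCorner : S →+ he.Corner where
  toFun x := ⟨e * x * e, x, rfl⟩
  map_zero' := Subtype.ext <| show e * 0 * e = 0 by rw [mul_zero, zero_mul]
  map_add' x y := Subtype.ext <| show e * (x + y) * e = e * x * e + e * y * e by
    rw [mul_add, add_mul]

end IsIdempotentElem

theorem IsPrimIdem.isIdempotentElem {S : Type*} [NonUnitalRing S] {e : S} (he : IsPrimIdem S e) :
    IsIdempotentElem e :=
  he.1

theorem IsPrimIdem.eq_zero_or_one_of_isIdempotentElem {S : Type*} [NonUnitalRing S] {e : S}
    (he : IsPrimIdem S e) {f : he.isIdempotentElem.Corner} (hf : IsIdempotentElem f) :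
    f = 0 ∨ f = 1 := by
  obtain ⟨hef, hfe⟩ := (Subsemigroup.mem_corner_iff he.isIdempotentElem).mp f.2
  exact (he.2.2 f.1 (congrArg Subtype.val hf) ⟨hfe, hef⟩).imp Subtype.ext Subtype.ext

variable {e : A}

theorem IsIdempotentElem.finite_corner (he : IsIdempotentElem e)
    (hfd : FiniteDimensional ℂ (subCorner A e e)) : Module.Finite ℂ he.Corner := by
  let ι : he.Corner →ₗ[ℂ] subCorner A e e :=
    { toFun x := ⟨x.1, by
        obtain ⟨hex, hxe⟩ := (Subsemigroup.mem_corner_iff he).mp x.2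
        show e * x.1 * e = x.1
        rw [hex, hxe]⟩
      map_add' _ _ := rfl
      map_smul' _ _ := rfl }
  exact Module.Finite.of_injective ι fun _ _ h => Subtype.ext congr(($h).1)

theorem IsPrimIdem.isLocalRing_corner (he : IsPrimIdem A e)
    (hfd : FiniteDimensional ℂ (subCorner A e e)) : IsLocalRing he.isIdempotentElem.Corner := by
  have := he.isIdempotentElem.finite_corner hfd
  have : Nontrivial he.isIdempotentElem.Corner :=
    ⟨⟨1, 0, fun h => he.2.1 (congrArg Subtype.val h)⟩⟩
  have : IsArtinianRing he.isIdempotentElem.Corner := isArtinian_of_tower ℂ inferInstance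
  have : IsNoetherianRing he.isIdempotentElem.Corner := isNoetherian_of_tower ℂ inferInstance
  exact .of_isIdempotentElem fun _ => he.eq_zero_or_one_of_isIdempotentElem

namespace IsIdempotentElem

variable (he : IsIdempotentElem e) [IsLocalRing he.Corner]

/-- The radical of `Ae`: the `x ∈ Ae` with `e A x` inside the maximal ideal of the local ring
`eAe`. -/
def radAe : Submodule ℂ A where
  carrier := {x | x * e = x ∧ ∀ a : A, he.toCorner (a * x) ∈ nonunits he.Corner}
  add_mem' := fun ⟨hx, hx'⟩ ⟨hy, hy'⟩ => ⟨by rw [add_mul, hx, hy], fun a => by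
    rw [mul_add, map_add]
    exact IsLocalRing.nonunits_add (hx' a) (hy' a)⟩
  zero_mem' := ⟨zero_mul e, fun a => by
    rw [mul_zero, map_zero]
    exact zero_mem_nonunits.mpr zero_ne_one⟩
  smul_mem' c x := fun ⟨hx, hx'⟩ => ⟨by rw [smul_mul_assoc, hx], fun a => by
    rw [mul_smul_comm, ← smul_mul_assoc]
    exact hx' (c • a)⟩

theorem radAe_le_subAe : he.radAe ≤ subAe A e := fun _ hx => hx.1

theorem mul_mem_radAe (a : A) {x : A} (hx : x ∈ he.radAe) : a * x ∈ he.radAe :=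
  ⟨by rw [mul_assoc, hx.1], fun b => by rw [← mul_assoc]; exact hx.2 (b * a)⟩

theorem radAe_ne_subAe : he.radAe ≠ subAe A e := by
  intro h
  have he_mem : e ∈ he.radAe := h ▸ (he.eq : e * e = e)
  have : he.toCorner (e * e) = 1 := Subtype.ext <| show e * (e * e) * e = e by simp only [he.eq]
  exact he_mem.2 e (this ▸ isUnit_one)

theorem eq_subAe_of_not_le_radAe {L : Submodule ℂ A} (hL : L ≤ subAe A e)
    (hLmul : ∀ a : A, ∀ x ∈ L, a * x ∈ L) (hLK : ¬L ≤ he.radAe) : L = subAe A e := by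
  obtain ⟨x, hxL, hxK⟩ := SetLike.not_le_iff_exists.mp hLK
  have hx : x * e = x := hL hxL
  obtain ⟨a, ha⟩ : ∃ a : A, IsUnit (he.toCorner (a * x)) := by
    by_contra! h
    exact hxK ⟨hx, h⟩
  obtain ⟨v, hv⟩ := ha.exists_left_inv
  have he_mem : e ∈ L := by
    have hv : v.1 * (e * (a * x) * e) = e := congrArg Subtype.val hv
    rw [show e = v.1 * (e * a) * x by simpa only [mul_assoc, hx] using hv.symm]
    exact hLmul _ x hxL
  refine le_antisymm hL fun y (hy : y * e = y) => ?_
  exact hy ▸ hLmul y e he_mem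

theorem isMaxProperSubmodOfAe_radAe : IsMaxProperSubmodOfAe e he.radAe :=
  ⟨he.radAe_le_subAe, fun a _ => he.mul_mem_radAe a, he.radAe_ne_subAe, fun L hL hLmul hKL =>
    (em (L ≤ he.radAe)).imp (le_antisymm · hKL) (he.eq_subAe_of_not_le_radAe hL hLmul)⟩

theorem _root_.IsMaxProperSubmodOfAe.eq_radAe {K : Submodule ℂ A}
    (hK : IsMaxProperSubmodOfAe e K) : K = he.radAe := by
  obtain ⟨hKle, hKmul, hKne, hKmax⟩ := hK
  by_cases h : K ≤ he.radAe
  · exact ((hKmax _ he.radAe_le_subAe (fun a _ => he.mul_mem_radAe a) h).resolve_right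
      he.radAe_ne_subAe).symm
  · exact absurd (he.eq_subAe_of_not_le_radAe hKle hKmul h) hKne

end IsIdempotentElem

/-- Let `e` be a primitive idempotent of a (possibly non-unital) associative
ℂ-algebra `A` with `dim eAe < ∞`. Then `Ae` has a maximal proper left `A`-submodule, and
any two maximal proper left `A`-submodules of `Ae` coincide. -/
theorem stmt_4 (e : A) (he : IsPrimIdem A e)
    (hfd : FiniteDimensional ℂ (subCorner A e e)) :
    (∃ K : Submodule ℂ A, IsMaxProperSubmodOfAe e K) ∧
    (∀ K₁ K₂ : Submodule ℂ A,
      IsMaxProperSubmodOfAe e K₁ → IsMaxProperSubmodOfAe e K₂ → K₁ = K₂) := by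
  have := he.isLocalRing_corner hfd
  exact ⟨⟨_, he.isIdempotentElem.isMaxProperSubmodOfAe_radAe⟩, fun K₁ K₂ h₁ h₂ =>
    (h₁.eq_radAe he.isIdempotentElem).trans (h₂.eq_radAe he.isIdempotentElem).symm⟩

end Stmt4
end

section
/- Let A be an AUF algebra. Then there exists a family (f_j)_{j∈J} of pairwise orthogonal primitive idempotents of A such that dim_ℂ f_j A f_k < ∞ for all j, k ∈ J and every element of A is a finite sum of elements of the subspaces f_j A f_k. -/
open scoped BigOperators

universe u v

section Aux
variable {A : Type u} [NonUnitalRing A]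

lemma subIdem_trans {p f e : A} (h1 : SubIdem A p f) (h2 : SubIdem A f e) : SubIdem A p e := by
  constructor
  · rw [← h1.1, mul_assoc, h2.1]
  · rw [← h1.2, ← mul_assoc, h2.2]

lemma orth_of_sub {p q e e' : A} (h1 : SubIdem A p e) (h2 : SubIdem A q e') (h : e * e' = 0) :
    p * q = 0 := by
  rw [← h1.1, ← h2.2, mul_assoc p e _, ← mul_assoc e e' q, h, zero_mul, mul_zero]

variable [Module ℂ A] [SMulCommClass ℂ A A] [IsScalarTower ℂ A A]

lemma mem_subCorner {e f x : A} : x ∈ subCorner A e f ↔ e * x * f = x := Iff.rfl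

lemma corner_mono {f g e e' : A} (h1 : SubIdem A f e) (h2 : SubIdem A g e') :
    subCorner A f g ≤ subCorner A e e' := by
  intro x hx
  rw [mem_subCorner] at *
  conv_lhs => rw [← hx]
  calc e * (f * x * g) * e' = (e * f) * x * (g * e') := by noncomm_ring
  _ = f * x * g := by rw [h1.2, h2.1]
  _ = x := hx

lemma sandwich {f g : A} (hf : IsIdem A f) (hg : IsIdem A g) (x : A) :
    f * x * g ∈ subCorner A f g := by
  rw [mem_subCorner]
  calc f * (f * x * g) * g = (f * f) * x * (g * g) := by noncomm_ring
  _ = f * x * g := by rw [hf, hg]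

lemma self_mem_corner {e : A} (he : IsIdem A e) : e ∈ subCorner A e e := by
  rw [mem_subCorner, he, he]

/-- Decomposition of a finite-dimensional-corner idempotent into orthogonal primitives. -/
lemma decomp (N : ℕ) : ∀ e : A, IsIdem A e → ∀ _ : FiniteDimensional ℂ (subCorner A e e),
    Module.finrank ℂ (subCorner A e e) ≤ N →
    ∃ S : Finset A, (∀ x ∈ S, IsPrimIdem A x) ∧
      (∀ x ∈ S, ∀ y ∈ S, x ≠ y → OrthIdem A x y) ∧
      (∀ x ∈ S, SubIdem A x e) ∧ e = ∑ x ∈ S, x := by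
  induction N with
  | zero =>
    intro e he hfd hrk
    have h0 : subCorner A e e = ⊥ := by
      haveI := hfd
      exact Submodule.finrank_eq_zero.mp (Nat.le_zero.mp hrk)
    have he0 : e = 0 := by
      have := self_mem_corner he
      rw [h0, Submodule.mem_bot] at this
      exact this
    exact ⟨∅, by simp, by simp, by simp, by simp [he0]⟩
  | succ N ih =>
    intro e he hfd hrk
    haveI := hfd
    by_cases he0 : e = 0
    · exact ⟨∅, by simp, by simp, by simp, by simp [he0]⟩
    by_cases hp : IsPrimIdem A e
    · refine ⟨{e}, by simpa using hp, ?_, by simp only [Finset.mem_singleton]; rintro x rfl; exact ⟨he, he⟩, by simp⟩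
      intro x hx y hy hxy
      simp only [Finset.mem_singleton] at hx hy
      exact absurd (hx.trans hy.symm) hxy
    · classical
      -- e not primitive: split
      simp only [IsPrimIdem, not_and, not_forall] at hp
      obtain ⟨f, hfidem, hfsub, hne⟩ := hp he he0
      push_neg at hne
      obtain ⟨hf0, hfe⟩ := hne
      set f' := e - f with hf'
      have hff' : f * f' = 0 := by
        rw [hf', mul_sub, hfsub.1, hfidem, sub_self]
      have hf'f : f' * f = 0 := by
        rw [hf', sub_mul, hfsub.2, hfidem, sub_self]
      have hf'idem : IsIdem A f' := by
        unfold IsIdem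
        rw [hf']
        rw [sub_mul, mul_sub, mul_sub, he, hfsub.2, hfsub.1, hfidem]
        abel
      have hf'sub : SubIdem A f' e := by
        constructor
        · rw [hf', sub_mul, he, hfsub.1]
        · rw [hf', mul_sub, he, hfsub.2]
      have hf'0 : f' ≠ 0 := by
        intro h
        apply hfe
        rw [hf'] at h
        exact (sub_eq_zero.mp h).symm
      have hltf : subCorner A f f < subCorner A e e := by
        refine lt_of_le_of_ne (corner_mono hfsub hfsub) fun hEq => ?_
        have he2 := self_mem_corner he
        rw [← hEq, mem_subCorner, hfsub.1, hfidem] at he2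
        exact hfe he2
      have hltf' : subCorner A f' f' < subCorner A e e := by
        refine lt_of_le_of_ne (corner_mono hf'sub hf'sub) fun hEq => ?_
        have he2 := self_mem_corner he
        rw [← hEq, mem_subCorner, hf'sub.1, hf'idem] at he2
        rw [hf'] at he2
        exact hf0 (sub_eq_self.mp he2)
      haveI hfd1 : FiniteDimensional ℂ (subCorner A f f) :=
        Submodule.finiteDimensional_of_le hltf.le
      haveI hfd2 : FiniteDimensional ℂ (subCorner A f' f') :=
        Submodule.finiteDimensional_of_le hltf'.le
      have hr1 : Module.finrank ℂ (subCorner A f f) ≤ N :=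
        Nat.lt_succ_iff.mp (lt_of_lt_of_le (Submodule.finrank_lt_finrank_of_lt hltf) hrk)
      have hr2 : Module.finrank ℂ (subCorner A f' f') ≤ N :=
        Nat.lt_succ_iff.mp (lt_of_lt_of_le (Submodule.finrank_lt_finrank_of_lt hltf') hrk)
      obtain ⟨S1, hS1p, hS1o, hS1s, hS1sum⟩ := ih f hfidem hfd1 hr1
      obtain ⟨S2, hS2p, hS2o, hS2s, hS2sum⟩ := ih f' hf'idem hfd2 hr2
      have hdisj : Disjoint S1 S2 := by
        rw [Finset.disjoint_left]
        intro x hx1 hx2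
        have h0 := orth_of_sub (hS1s x hx1) (hS2s x hx2) hff'
        rw [(hS1p x hx1).1] at h0
        exact (hS1p x hx1).2.1 h0
      refine ⟨S1 ∪ S2, ?_, ?_, ?_, ?_⟩
      · intro x hx
        rcases Finset.mem_union.mp hx with h | h
        exacts [hS1p x h, hS2p x h]
      · intro x hx y hy hxy
        rcases Finset.mem_union.mp hx with h1 | h1 <;> rcases Finset.mem_union.mp hy with h2 | h2
        · exact hS1o x h1 y h2 hxy
        · exact ⟨orth_of_sub (hS1s x h1) (hS2s y h2) hff',
            orth_of_sub (hS2s y h2) (hS1s x h1) hf'f⟩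
        · exact ⟨orth_of_sub (hS2s x h1) (hS1s y h2) hf'f,
            orth_of_sub (hS1s y h2) (hS2s x h1) hff'⟩
        · exact hS2o x h1 y h2 hxy
      · intro x hx
        rcases Finset.mem_union.mp hx with h | h
        exacts [subIdem_trans (hS1s x h) hfsub, subIdem_trans (hS2s x h) hf'sub]
      · rw [Finset.sum_union hdisj, ← hS1sum, ← hS2sum, hf']
        abel
end Aux

/-- An AUF algebra admits a witnessing family of pairwise orthogonal *primitive*
idempotents. -/
theorem stmt_5 {A : Type u} [NonUnitalRing A] [Module ℂ A] [SMulCommClass ℂ A A]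
    [IsScalarTower ℂ A A] (hA : IsAUF A) :
    ∃ (J : Type u) (F : J → A),
      (∀ j, IsPrimIdem A (F j)) ∧
      (∀ j k, j ≠ k → OrthIdem A (F j) (F k)) ∧
      (∀ j k, FiniteDimensional ℂ (subCorner A (F j) (F k))) ∧
      (⨆ j, ⨆ k, subCorner A (F j) (F k)) = ⊤ := by
  classical
  obtain ⟨I, E, hidem, horth, hfd, hsup⟩ := hA
  choose S h1 h2 h3 h4 using fun i =>
    decomp (Module.finrank ℂ (subCorner A (E i) (E i))) (E i) (hidem i) (hfd i i) le_rfl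
  refine ⟨Σ i : I, {x // x ∈ S i}, fun j => j.2.1, fun j => h1 j.1 j.2.1 j.2.2, ?_, ?_, ?_⟩
  · rintro ⟨i, x, hx⟩ ⟨i', y, hy⟩ hne
    by_cases hii : i = i'
    · subst hii
      refine h2 i x hx y hy fun hxy => hne ?_
      subst hxy
      rfl
    · have h0 := (horth i i' hii).1
      have h0' := (horth i' i (Ne.symm hii)).1
      exact ⟨orth_of_sub (h3 i x hx) (h3 i' y hy) h0,
        orth_of_sub (h3 i' y hy) (h3 i x hx) h0'⟩
  · intro j k
    haveI := hfd j.1 k.1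
    exact Submodule.finiteDimensional_of_le
      (corner_mono (h3 j.1 j.2.1 j.2.2) (h3 k.1 k.2.1 k.2.2))
  · rw [eq_top_iff, ← hsup]
    refine iSup_le fun i => iSup_le fun i' => ?_
    intro x hx
    rw [mem_subCorner] at hx
    have hxs : x = ∑ a ∈ S i, ∑ b ∈ S i', a * x * b := by
      conv_lhs => rw [← hx, h4 i, h4 i']
      simp_rw [Finset.sum_mul, Finset.mul_sum]
    rw [hxs]
    refine Submodule.sum_mem _ fun a ha => Submodule.sum_mem _ fun b hb => ?_
    exact Submodule.mem_iSup_of_mem ⟨i, a, ha⟩ (Submodule.mem_iSup_of_mem ⟨i', b, hb⟩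
      (sandwich (h1 i a ha).1 (h1 i' b hb).1 x))
end

section
/- Let A be an associative ℂ-algebra (not necessarily unital), B a unital ℂ-algebra, and M an A-B bimodule. Suppose (α_i, α̌^i)_{i∈I} and (β_j, β̌^j)_{j∈J} are two left coordinate systems of M. Then for every x ∈ A, the sums Σ_{i∈I} α̌^i(x·α_i(1_B)) and Σ_{j∈J} β̌^j(x·β_j(1_B)) have only finitely many nonzero terms and their difference lies in [B,B]; that is, the two sums define the same element of B/[B,B]. -/
open scoped BigOperators

universe u v w

section Bimodule

variable (A B M : Type*) [NonUnitalRing A] [Module ℂ A] [SMulCommClass ℂ A A]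
  [IsScalarTower ℂ A A] [Ring B] [Algebra ℂ B] [AddCommGroup M] [Module ℂ M]

/-- An `A`-`B` bimodule structure on the ℂ-vector space `M`: a ℂ-bilinear associative left
`A`-action and a ℂ-bilinear associative unital right `B`-action which commute. -/
structure BimoduleStr where
  /-- the left action of `A` -/
  l : A →ₗ[ℂ] Module.End ℂ M
  /-- the right action of `B` -/
  r : B →ₗ[ℂ] Module.End ℂ M
  l_mul : ∀ a a' : A, l (a * a') = l a ∘ₗ l a'
  r_one : r 1 = LinearMap.id
  r_mul : ∀ b b' : B, r (b * b') = r b' ∘ₗ r b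
  lr_comm : ∀ (a : A) (b : B), l a ∘ₗ r b = r b ∘ₗ l a

variable {A B M}

/-- `(α i, α̌ i)_{i : I}` is a left coordinate system of the `A`-`B` bimodule `M`. -/
def IsLeftCoordSys (ρ : BimoduleStr A B M) {I : Type v}
    (α : I → (B →ₗ[ℂ] M)) (αv : I → (M →ₗ[ℂ] B)) : Prop :=
  (∀ (i : I) (b c : B), α i (b * c) = ρ.r c (α i b)) ∧
  (∀ (i : I) (ξ : M) (b : B), αv i (ρ.r b ξ) = αv i ξ * b) ∧
  (∀ ξ : M, {i | αv i ξ ≠ 0}.Finite ∧ ∑ᶠ i, α i (αv i ξ) = ξ) ∧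
  (∀ x : A, {i | ρ.l x ∘ₗ α i ≠ 0}.Finite ∧ {i | αv i ∘ₗ ρ.l x ≠ 0}.Finite)

variable (B) in
/-- The ℂ-span of commutators `[B, B]`. -/
def commSpan : Submodule ℂ B := Submodule.span ℂ {z : B | ∃ a b : B, z = a * b - b * a}

end Bimodule

/-- The B-trace is independent of the choice of a left coordinate system:
for two left coordinate systems of an `A`-`B` bimodule `M`, the corresponding trace sums
at any `x ∈ A` have finite support and agree modulo `[B,B]`. -/
theorem stmt_8 {A B M : Type*} [NonUnitalRing A] [Module ℂ A] [SMulCommClass ℂ A A]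
    [IsScalarTower ℂ A A] [Ring B] [Algebra ℂ B] [AddCommGroup M] [Module ℂ M]
    (ρ : BimoduleStr A B M) {I : Type v} {J : Type w}
    (α : I → (B →ₗ[ℂ] M)) (αv : I → (M →ₗ[ℂ] B))
    (β : J → (B →ₗ[ℂ] M)) (βv : J → (M →ₗ[ℂ] B))
    (hα : IsLeftCoordSys ρ α αv) (hβ : IsLeftCoordSys ρ β βv) (x : A) :
    {i | αv i (ρ.l x (α i 1)) ≠ 0}.Finite ∧
    {j | βv j (ρ.l x (β j 1)) ≠ 0}.Finite ∧
    (∑ᶠ i, αv i (ρ.l x (α i 1))) - (∑ᶠ j, βv j (ρ.l x (β j 1))) ∈ commSpan B := by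
  obtain ⟨h1α, h2α, h3α, h4α⟩ := hα
  obtain ⟨h1β, h2β, h3β, h4β⟩ := hβ
  -- basic facts
  have hαone : ∀ (i : I) (b : B), α i b = ρ.r b (α i 1) := by
    intro i b; have := h1α i 1 b; rwa [one_mul] at this
  have hβone : ∀ (j : J) (b : B), β j b = ρ.r b (β j 1) := by
    intro j b; have := h1β j 1 b; rwa [one_mul] at this
  have hlr : ∀ (b : B) (m : M), ρ.l x (ρ.r b m) = ρ.r b (ρ.l x m) := by
    intro b m
    have := ρ.lr_comm x b
    exact LinearMap.congr_fun this m
  -- supports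
  have hsuppα : {i | αv i (ρ.l x (α i 1)) ≠ 0} ⊆ {i | αv i ∘ₗ ρ.l x ≠ 0} := by
    intro i hi
    simp only [Set.mem_setOf_eq] at hi ⊢
    intro h0
    exact hi (by simpa using LinearMap.congr_fun h0 (α i 1))
  have hsuppβ : {j | βv j (ρ.l x (β j 1)) ≠ 0} ⊆ {j | βv j ∘ₗ ρ.l x ≠ 0} := by
    intro j hj
    simp only [Set.mem_setOf_eq] at hj ⊢
    intro h0
    exact hj (by simpa using LinearMap.congr_fun h0 (β j 1))
  have finα := ((h4α x).2).subset hsuppα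
  have finβ := ((h4β x).2).subset hsuppβ
  refine ⟨finα, finβ, ?_⟩
  classical
  set c : I → J → B := fun i j => αv i (ρ.l x (β j 1)) with hc
  set d : J → I → B := fun j i => βv j (α i 1) with hd
  set sI : Finset I := (h4α x).2.toFinset with hsI
  set sJ : Finset J := sI.biUnion (fun i => (h3β (α i 1)).1.toFinset) ∪ (h4β x).2.toFinset
    with hsJ
  -- expansion lemmas
  have expβ : ∀ (ξ : M) (t : Finset J), {j | βv j ξ ≠ 0} ⊆ ↑t →
      ξ = ∑ j ∈ t, β j (βv j ξ) := by
    intro ξ t ht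
    conv_lhs => rw [← (h3β ξ).2]
    refine finsum_eq_finset_sum_of_support_subset _ ?_
    intro j hj
    simp only [Function.mem_support] at hj
    apply ht
    simp only [Set.mem_setOf_eq]
    intro h0
    exact hj (by rw [h0, map_zero])
  have expα : ∀ (ξ : M) (t : Finset I), {i | αv i ξ ≠ 0} ⊆ ↑t →
      ξ = ∑ i ∈ t, α i (αv i ξ) := by
    intro ξ t ht
    conv_lhs => rw [← (h3α ξ).2]
    refine finsum_eq_finset_sum_of_support_subset _ ?_
    intro i hi
    simp only [Function.mem_support] at hi
    apply ht
    simp only [Set.mem_setOf_eq]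
    intro h0
    exact hi (by rw [h0, map_zero])
  -- first sum
  have hSumα : ∑ᶠ i, αv i (ρ.l x (α i 1)) = ∑ i ∈ sI, ∑ j ∈ sJ, c i j * d j i := by
    have h1 : ∑ᶠ i, αv i (ρ.l x (α i 1)) = ∑ i ∈ sI, αv i (ρ.l x (α i 1)) := by
      refine finsum_eq_finset_sum_of_support_subset _ ?_
      intro i hi
      simp only [hsI, Set.Finite.coe_toFinset]
      exact hsuppα hi
    rw [h1]
    refine Finset.sum_congr rfl ?_
    intro i hi
    have hJi : {j | βv j (α i 1) ≠ 0} ⊆ ↑sJ := by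
      intro j hj
      exact Finset.mem_coe.mpr (Finset.mem_union_left _ (Finset.mem_biUnion.mpr
        ⟨i, hi, (h3β (α i 1)).1.mem_toFinset.mpr hj⟩))
    calc αv i (ρ.l x (α i 1))
        = αv i (ρ.l x (∑ j ∈ sJ, β j (βv j (α i 1)))) := by rw [← expβ (α i 1) sJ hJi]
      _ = ∑ j ∈ sJ, αv i (ρ.l x (β j (d j i))) := by rw [map_sum, map_sum]
      _ = ∑ j ∈ sJ, c i j * d j i := by
          refine Finset.sum_congr rfl fun j _ => ?_
          rw [hβone j (d j i), hlr, h2α]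
  -- second sum
  have hSumβ : ∑ᶠ j, βv j (ρ.l x (β j 1)) = ∑ j ∈ sJ, ∑ i ∈ sI, d j i * c i j := by
    have h1 : ∑ᶠ j, βv j (ρ.l x (β j 1)) = ∑ j ∈ sJ, βv j (ρ.l x (β j 1)) := by
      refine finsum_eq_finset_sum_of_support_subset _ ?_
      intro j hj
      simp only [hsJ, Finset.coe_union, Set.mem_union]
      right
      simpa using hsuppβ hj
    rw [h1]
    refine Finset.sum_congr rfl ?_
    intro j _
    have hK : {i | αv i (ρ.l x (β j 1)) ≠ 0} ⊆ ↑sI := by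
      intro i hi
      simp only [Set.mem_setOf_eq] at hi
      simp only [hsI, Set.Finite.coe_toFinset, Set.mem_setOf_eq]
      intro h0
      exact hi (by simpa using LinearMap.congr_fun h0 (β j 1))
    calc βv j (ρ.l x (β j 1))
        = βv j (∑ i ∈ sI, α i (αv i (ρ.l x (β j 1)))) := by
          rw [← expα (ρ.l x (β j 1)) sI hK]
      _ = ∑ i ∈ sI, βv j (α i (c i j)) := by rw [map_sum]
      _ = ∑ i ∈ sI, d j i * c i j := by
          refine Finset.sum_congr rfl fun i _ => ?_
          rw [hαone i (c i j), h2β]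
  rw [hSumα, hSumβ, Finset.sum_comm (s := sJ) (t := sI), ← Finset.sum_sub_distrib]
  refine Submodule.sum_mem _ fun i _ => ?_
  rw [← Finset.sum_sub_distrib]
  refine Submodule.sum_mem _ fun j _ => ?_
  exact Submodule.subset_span ⟨c i j, d j i, rfl⟩
end

section
/- Let A be an associative ℂ-algebra (not necessarily unital), B a unital ℂ-algebra, and M an A-B bimodule with a left coordinate system (α_i, α̌^i)_{i∈I}. Then the B-trace Tr^B : A → B/[B,B], Tr^B(x) = class of Σ_{i∈I} α̌^i(x·α_i(1_B)), is symmetric: for all x, y ∈ A, Σ_{i∈I} α̌^i((xy)·α_i(1_B)) − Σ_{i∈I} α̌^i((yx)·α_i(1_B)) ∈ [B,B] (both sums having only finitely many nonzero terms). -/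
open scoped BigOperators

universe u v w

/-- The B-trace of an `A`-`B` bimodule with a left coordinate system is
symmetric: for `x, y ∈ A`, the trace sums of `x * y` and of `y * x` have finite support
and agree modulo `[B,B]`. -/
theorem stmt_9 {A B M : Type*} [NonUnitalRing A] [Module ℂ A] [SMulCommClass ℂ A A]
    [IsScalarTower ℂ A A] [Ring B] [Algebra ℂ B] [AddCommGroup M] [Module ℂ M]
    (ρ : BimoduleStr A B M) {I : Type v}
    (α : I → (B →ₗ[ℂ] M)) (αv : I → (M →ₗ[ℂ] B))
    (hα : IsLeftCoordSys ρ α αv) (x y : A) :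
    {i | αv i (ρ.l (x * y) (α i 1)) ≠ 0}.Finite ∧
    {i | αv i (ρ.l (y * x) (α i 1)) ≠ 0}.Finite ∧
    (∑ᶠ i, αv i (ρ.l (x * y) (α i 1))) - (∑ᶠ i, αv i (ρ.l (y * x) (α i 1))) ∈ commSpan B := by
  obtain ⟨h1, h2, h3, h4⟩ := hα
  have hfinU : ({i | ρ.l x ∘ₗ α i ≠ 0} ∪ {i | αv i ∘ₗ ρ.l x ≠ 0} ∪
      ({i | ρ.l y ∘ₗ α i ≠ 0} ∪ {i | αv i ∘ₗ ρ.l y ≠ 0}) : Set I).Finite :=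
    (((h4 x).1.union (h4 x).2).union ((h4 y).1.union (h4 y).2))
  set U : Finset I := hfinU.toFinset with hUdef
  have memU : ∀ i : I, i ∈ U ↔ (ρ.l x ∘ₗ α i ≠ 0 ∨ αv i ∘ₗ ρ.l x ≠ 0 ∨
      ρ.l y ∘ₗ α i ≠ 0 ∨ αv i ∘ₗ ρ.l y ≠ 0) := by
    intro i
    rw [hUdef, Set.Finite.mem_toFinset]
    simp [Set.mem_union, or_assoc]
  -- pointwise key identity
  have key : ∀ (z : A) (i j : I) (c : B),
      αv i (ρ.l z (α j c)) = αv i (ρ.l z (α j 1)) * c := by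
    intro z i j c
    have hc : α j c = ρ.r c (α j 1) := by rw [← h1 j 1 c, one_mul]
    have hcm : ρ.l z (ρ.r c (α j 1)) = ρ.r c (ρ.l z (α j 1)) :=
      LinearMap.congr_fun (ρ.lr_comm z c) (α j 1)
    rw [hc, hcm, h2]
  -- expansion over U
  have expand : ∀ (z : A) (i : I) (ξ : M), {j | αv j ξ ≠ 0} ⊆ ↑U →
      αv i (ρ.l z ξ) = ∑ j ∈ U, αv i (ρ.l z (α j 1)) * αv j ξ := by
    intro z i ξ hsub
    have hsupp : Function.support (fun j => α j (αv j ξ)) ⊆ ↑U := by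
      intro j hj
      apply hsub
      intro h0
      apply hj
      simp [h0]
    have hξ : ∑ j ∈ U, α j (αv j ξ) = ξ := by
      rw [← finsum_eq_sum_of_support_subset _ hsupp]
      exact (h3 ξ).2
    conv_lhs => rw [← hξ]
    rw [map_sum, map_sum]
    exact Finset.sum_congr rfl fun j _ => key z i j _
  -- supports
  have hsubxy : {i | αv i (ρ.l (x * y) (α i 1)) ≠ 0} ⊆ {i | αv i ∘ₗ ρ.l (x * y) ≠ 0} := by
    intro i hi h0
    exact hi (by simpa using LinearMap.congr_fun h0 (α i 1))
  have hsubyx : {i | αv i (ρ.l (y * x) (α i 1)) ≠ 0} ⊆ {i | αv i ∘ₗ ρ.l (y * x) ≠ 0} := by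
    intro i hi h0
    exact hi (by simpa using LinearMap.congr_fun h0 (α i 1))
  refine ⟨(h4 (x * y)).2.subset hsubxy, (h4 (y * x)).2.subset hsubyx, ?_⟩
  set u : I → I → B := fun i j => αv i (ρ.l x (α j 1)) with hu
  set v : I → I → B := fun i j => αv j (ρ.l y (α i 1)) with hv
  have hlxy : ∀ i, ρ.l (x * y) (α i 1) = ρ.l x (ρ.l y (α i 1)) := by
    intro i; rw [ρ.l_mul]; rfl
  have hlyx : ∀ i, ρ.l (y * x) (α i 1) = ρ.l y (ρ.l x (α i 1)) := by
    intro i; rw [ρ.l_mul]; rfl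
  have hsupy : ∀ i : I, {j | αv j (ρ.l y (α i 1)) ≠ 0} ⊆ ↑U := by
    intro i j hj
    rw [Finset.mem_coe, memU]
    refine Or.inr (Or.inr (Or.inr ?_))
    intro h0
    exact hj (by simpa using LinearMap.congr_fun h0 (α i 1))
  have hsupx : ∀ i : I, {j | αv j (ρ.l x (α i 1)) ≠ 0} ⊆ ↑U := by
    intro i j hj
    rw [Finset.mem_coe, memU]
    refine Or.inr (Or.inl ?_)
    intro h0
    exact hj (by simpa using LinearMap.congr_fun h0 (α i 1))
  have hf : ∀ i, αv i (ρ.l (x * y) (α i 1)) = ∑ j ∈ U, u i j * v i j := by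
    intro i
    rw [hlxy i, expand x i _ (hsupy i)]
  have hg : ∀ i, αv i (ρ.l (y * x) (α i 1)) = ∑ j ∈ U, v j i * u j i := by
    intro i
    rw [hlyx i, expand y i _ (hsupx i)]
  have hsf : Function.support (fun i => αv i (ρ.l (x * y) (α i 1))) ⊆ ↑U := by
    intro i hi
    rw [Finset.mem_coe, memU]
    refine Or.inr (Or.inl ?_)
    intro h0
    exact hi (by simp [hlxy i, show αv i (ρ.l x (ρ.l y (α i 1))) = 0 by
      simpa using LinearMap.congr_fun h0 (ρ.l y (α i 1))])
  have hsg : Function.support (fun i => αv i (ρ.l (y * x) (α i 1))) ⊆ ↑U := by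
    intro i hi
    rw [Finset.mem_coe, memU]
    refine Or.inr (Or.inr (Or.inr ?_))
    intro h0
    exact hi (by simp [hlyx i, show αv i (ρ.l y (ρ.l x (α i 1))) = 0 by
      simpa using LinearMap.congr_fun h0 (ρ.l x (α i 1))])
  rw [finsum_eq_sum_of_support_subset _ hsf, finsum_eq_sum_of_support_subset _ hsg]
  have e1 : ∑ i ∈ U, αv i (ρ.l (x * y) (α i 1)) = ∑ i ∈ U, ∑ j ∈ U, u i j * v i j :=
    Finset.sum_congr rfl fun i _ => hf i
  have e2 : ∑ i ∈ U, αv i (ρ.l (y * x) (α i 1)) = ∑ i ∈ U, ∑ j ∈ U, v i j * u i j := by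
    rw [Finset.sum_congr rfl fun i _ => hg i, Finset.sum_comm]
  rw [e1, e2, ← Finset.sum_sub_distrib]
  refine Submodule.sum_mem _ fun i _ => ?_
  rw [← Finset.sum_sub_distrib]
  exact Submodule.sum_mem _ fun j _ =>
    Submodule.subset_span ⟨u i j, v i j, rfl⟩
end

section
/- Let A be an AUF algebra. Then A has a generating idempotent if and only if the set of primitive idempotents of A is partitioned into finitely many classes by the relation of equivalence of idempotents. -/
open scoped BigOperators

universe u v

/-!
For the nontrivial direction, make finitely many representatives of the classes pairwise
orthogonal one at a time, replacing each by an equivalent idempotent. For primitive `p` and `e`,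
the corner `pAp` is a finite-dimensional algebra whose only idempotents are `0` and `p`, so by
Fitting's lemma `pep` is either invertible or nilpotent there. If it is invertible, `p` is
equivalent to a nonzero idempotent below `e`, hence to `e`. If it is nilpotent, `p - pep` is
invertible in `pAp`, and its inverse turns `p` into an equivalent idempotent orthogonal to `e` and
to everything orthogonal to both `p` and `e`, so earlier orthogonality is not destroyed.
-/

section Idempotents

variable {R : Type*} [NonUnitalRing R] {e f g x : R}

theorem IsIdem.absorb_left (he : IsIdem R e) (hx : e * x * f = x) : e * x = x := by
  rw [← hx, ← mul_assoc, ← mul_assoc, show e * e = e from he]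

theorem IsIdem.absorb_right (hf : IsIdem R f) (hx : e * x * f = x) : x * f = x := by
  rw [← hx, mul_assoc, show f * f = f from hf]

theorem OrthIdem.symm (h : OrthIdem R e f) : OrthIdem R f e :=
  ⟨h.2, h.1⟩

theorem IdemEquiv.refl (he : IsIdem R e) : IdemEquiv R e e :=
  ⟨e, e, by rw [he, he], by rw [he, he], he, he⟩

theorem IdemEquiv.isIdem (he : IsIdem R e) (h : IdemEquiv R e f) : IsIdem R f := by
  obtain ⟨u, v, -, hv, huv, hvu⟩ := h
  have hve : v * e = v := he.absorb_right hv
  calc f * f = v * (u * v) * u := by rw [← hvu]; noncomm_ring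
    _ = f := by rw [huv, hve, hvu]

theorem IdemEquiv.trans (he : IsIdem R e) (h₁ : IdemEquiv R e f) (h₂ : IdemEquiv R f g) :
    IdemEquiv R e g := by
  have hf := h₁.isIdem he
  have hg := h₂.isIdem hf
  obtain ⟨u, v, hu, hv, huv, hvu⟩ := h₁
  obtain ⟨s, t, hs, ht, hst, hts⟩ := h₂
  refine ⟨u * s, t * v, ?_, ?_, ?_, ?_⟩
  · rw [← mul_assoc, he.absorb_left hu, mul_assoc, hg.absorb_right hs]
  · rw [← mul_assoc, hg.absorb_left ht, mul_assoc, he.absorb_right hv]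
  · rw [mul_assoc, ← mul_assoc s, hst, ← mul_assoc, hf.absorb_right hu, huv]
  · rw [mul_assoc, ← mul_assoc v, hvu, ← mul_assoc, hf.absorb_right ht, hts]

theorem IdemEquiv.ne_zero (h : IdemEquiv R e f) (he0 : e ≠ 0) : f ≠ 0 := by
  obtain ⟨u, v, hu, -, huv, -⟩ := h
  rintro rfl
  exact he0 (by rw [← huv, ← hu, mul_zero, zero_mul])

/-- Conjugation by the partial isometries carries idempotents below `f` to idempotents below `e`
and back. -/
theorem IsPrimIdem.of_idemEquiv (he : IsPrimIdem R e) (h : IdemEquiv R e f) : IsPrimIdem R f := by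
  have hf := h.isIdem he.1
  refine ⟨hf, h.ne_zero he.2.1, fun k hk ⟨hkf, hfk⟩ => ?_⟩
  obtain ⟨u, v, hu, hv, huv, hvu⟩ := h
  have heu : e * u = u := he.1.absorb_left hu
  have hve : v * e = v := he.1.absorb_right hv
  have hk' : IsIdem R (u * k * v) := by
    calc u * k * v * (u * k * v) = u * (k * (v * u) * k) * v := by noncomm_ring
      _ = u * k * v := by rw [hvu, hkf, hk]
  have hk'e : SubIdem R (u * k * v) e :=
    ⟨by rw [mul_assoc, hve], by rw [← mul_assoc, ← mul_assoc, heu]⟩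
  have hback : v * (u * k * v) * u = k := by
    calc v * (u * k * v) * u = (v * u) * k * (v * u) := by noncomm_ring
      _ = k := by rw [hvu, hfk, hkf]
  rcases he.2.2 _ hk' hk'e with h0 | h1
  · left
    rw [← hback, h0, mul_zero, zero_mul]
  · right
    rw [← hback, h1, hve, hvu]

end Idempotents

section OrthogonalSum

variable {R : Type*} [NonUnitalRing R] {ι : Type*} {E : ι → R} {s : Finset ι}

theorem sum_mul_of_mem (hE : ∀ i ∈ s, IsIdem R (E i))
    (horth : ∀ i ∈ s, ∀ j ∈ s, i ≠ j → E i * E j = 0) {j : ι} (hj : j ∈ s) :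
    (∑ i ∈ s, E i) * E j = E j := by
  rw [Finset.sum_mul, Finset.sum_eq_single_of_mem j hj fun i hi hij => horth i hi j hj hij]
  exact hE j hj

theorem mul_sum_of_mem (hE : ∀ i ∈ s, IsIdem R (E i))
    (horth : ∀ i ∈ s, ∀ j ∈ s, i ≠ j → E i * E j = 0) {j : ι} (hj : j ∈ s) :
    E j * (∑ i ∈ s, E i) = E j := by
  rw [Finset.mul_sum, Finset.sum_eq_single_of_mem j hj fun i hi hij => horth j hj i hi hij.symm]
  exact hE j hj

theorem isIdem_sum (hE : ∀ i ∈ s, IsIdem R (E i))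
    (horth : ∀ i ∈ s, ∀ j ∈ s, i ≠ j → E i * E j = 0) : IsIdem R (∑ i ∈ s, E i) := by
  change (∑ i ∈ s, E i) * _ = _
  rw [Finset.mul_sum]
  exact Finset.sum_congr rfl fun j hj => sum_mul_of_mem hE horth hj

end OrthogonalSum

section AUF

variable {A : Type*} [NonUnitalRing A] [Module ℂ A] [SMulCommClass ℂ A A] [IsScalarTower ℂ A A]

theorem subCorner_le_subCorner {e f e' f' : A} (he : e' * e = e) (hf : f * f' = f) :
    subCorner A e f ≤ subCorner A e' f' := fun x (hx : e * x * f = x) => by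
  change e' * x * f' = x
  rw [← hx, ← mul_assoc, ← mul_assoc, he, mul_assoc, hf]

theorem subCorner_sum_le {ι : Type*} {E : ι → A} {s : Finset ι} (hE : ∀ i ∈ s, IsIdem A (E i)) :
    subCorner A (∑ i ∈ s, E i) (∑ i ∈ s, E i) ≤
      (s ×ˢ s).sup fun ij => subCorner A (E ij.1) (E ij.2) := fun x (hx : _ * x * _ = x) => by
  rw [← hx, Finset.sum_mul, Finset.sum_mul_sum, ← Finset.sum_product']
  refine Submodule.sum_mem _ fun ij hij => ?_
  refine Finset.le_sup (f := fun ij => subCorner A (E ij.1) (E ij.2)) hij ?_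
  obtain ⟨hi, hj⟩ := Finset.mem_product.mp hij
  change E ij.1 * (E ij.1 * x * E ij.2) * E ij.2 = _
  rw [← mul_assoc, ← mul_assoc, show E ij.1 * E ij.1 = _ from hE _ hi, mul_assoc,
    show E ij.2 * E ij.2 = _ from hE _ hj]

theorem IsAUFWitness.exists_mem_subCorner_sum {ι : Type*} {E : ι → A} (hE : IsAUFWitness A E)
    (x : A) : ∃ s : Finset ι, x ∈ subCorner A (∑ i ∈ s, E i) (∑ i ∈ s, E i) := by
  classical
  obtain ⟨hidem, horth, -, hspan⟩ := hE
  have hx : x ∈ ⨆ ij : ι × ι, subCorner A (E ij.1) (E ij.2) := by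
    rw [iSup_prod, hspan]
    exact Submodule.mem_top
  obtain ⟨S, hS⟩ := Submodule.mem_iSup_iff_exists_finset.mp hx
  set s := S.image Prod.fst ∪ S.image Prod.snd
  have hortho : ∀ i ∈ s, ∀ j ∈ s, i ≠ j → E i * E j = 0 := fun i _ j _ hij => (horth i j hij).1
  have hle :
      (⨆ ij ∈ S, subCorner A (E ij.1) (E ij.2)) ≤ subCorner A (∑ i ∈ s, E i) (∑ i ∈ s, E i) :=
    iSup₂_le fun ij hij => subCorner_le_subCorner
      (sum_mul_of_mem (fun i _ => hidem i) hortho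
        (Finset.mem_union_left _ (Finset.mem_image_of_mem _ hij)))
      (mul_sum_of_mem (fun i _ => hidem i) hortho
        (Finset.mem_union_right _ (Finset.mem_image_of_mem _ hij)))
  exact ⟨s, hle hS⟩

theorem IsAUF.finiteDimensional_subCorner (hA : IsAUF A) (p : A) :
    FiniteDimensional ℂ (subCorner A p p) := by
  obtain ⟨I, E, hE⟩ := hA
  have : ∀ i j, FiniteDimensional ℂ (subCorner A (E i) (E j)) := hE.2.2.1
  obtain ⟨s, hps⟩ := hE.exists_mem_subCorner_sum p
  have hg : IsIdem A (∑ i ∈ s, E i) :=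
    isIdem_sum (fun i _ => hE.1 i) fun i _ j _ hij => (hE.2.1 i j hij).1
  exact Submodule.finiteDimensional_of_le <|
    (subCorner_le_subCorner (hg.absorb_left hps) (hg.absorb_right hps)).trans
      (subCorner_sum_le fun i _ => hE.1 i)

end AUF

-- Fitting decomposition of right multiplication by `y`: the component of `1` in the range is an
-- idempotent, so either the kernel or the range is everything.
theorem IsArtinianRing.isUnit_or_isNilpotent_of_forall_isIdempotentElem {C : Type*} [Ring C]
    [IsArtinianRing C] (hC : ∀ e : C, IsIdempotentElem e → e = 0 ∨ e = 1) (y : C) :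
    IsUnit y ∨ IsNilpotent y := by
  set φ : Module.End C C := LinearMap.toSpanSingleton C C y
  have hφ : ∀ n c, (φ ^ n) c = c * y ^ n := by
    intro n
    induction n with
    | zero => simp
    | succ n ih => intro c; rw [pow_succ', Module.End.mul_apply, ih]; simp [φ, pow_succ, mul_assoc]
  obtain ⟨n, hn, hcompl⟩ :=
    ((Filter.eventually_ge_atTop 1).and φ.eventually_isCompl_ker_pow_range_pow).exists
  obtain ⟨a, ha, b, hb, hab⟩ :=
    Submodule.mem_sup.mp (hcompl.codisjoint.eq_top ▸ Submodule.mem_top (x := (1 : C)))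
  have hbb : IsIdempotentElem b := by
    have hmem : b * a ∈ LinearMap.ker (φ ^ n) ⊓ LinearMap.range (φ ^ n) := by
      refine ⟨Submodule.smul_mem _ b ha, ?_⟩
      rw [eq_sub_of_add_eq hab, mul_sub, mul_one]
      exact Submodule.sub_mem _ hb (Submodule.smul_mem _ b hb)
    rw [hcompl.disjoint.eq_bot, Submodule.mem_bot] at hmem
    have : b * (a + b) = b := by rw [hab, mul_one]
    rwa [mul_add, hmem, zero_add] at this
  rcases hC b hbb with rfl | rfl
  · rw [add_zero] at hab
    subst hab
    exact .inr ⟨n, by simpa [hφ] using ha⟩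
  · obtain ⟨c, hc⟩ := hb
    rw [hφ] at hc
    obtain ⟨m, rfl⟩ := Nat.exists_eq_add_of_le' hn
    exact .inl (.of_mul_eq_one_right (c * y ^ m) (by rw [mul_assoc, ← pow_succ, hc]))

namespace IsIdempotentElem.Corner

variable {A : Type*} [NonUnitalRing A] {p : A} {hp : IsIdempotentElem p}

theorem idem_mul_val (x : hp.Corner) : p * x.1 = x.1 := ((Subsemigroup.mem_corner_iff hp).1 x.2).1

theorem val_mul_idem (x : hp.Corner) : x.1 * p = x.1 := ((Subsemigroup.mem_corner_iff hp).1 x.2).2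

theorem eq_zero_or_one (hprim : IsPrimIdem A p) (e : hp.Corner) (he : IsIdempotentElem e) :
    e = 0 ∨ e = 1 := by
  rcases hprim.2.2 e.1 (congrArg Subtype.val he) ⟨val_mul_idem e, idem_mul_val e⟩ with h | h
  · exact .inl (Subtype.ext h)
  · exact .inr (Subtype.ext h)

variable [Module ℂ A] [SMulCommClass ℂ A A] [IsScalarTower ℂ A A]

instance : SMul ℂ hp.Corner where
  smul c x := ⟨c • x.1, by
    obtain ⟨r, hr⟩ := x.2
    exact ⟨c • r, by simp only [mul_smul_comm, smul_mul_assoc, ← hr]⟩⟩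

instance : Module ℂ hp.Corner :=
  Function.Injective.module ℂ (AddMonoidHom.mk' (fun x : hp.Corner => x.1) fun _ _ => rfl)
    Subtype.val_injective fun _ _ => rfl

instance : IsScalarTower ℂ hp.Corner hp.Corner where
  smul_assoc c x y := Subtype.ext (smul_mul_assoc c x.1 y.1)

theorem finiteDimensional (h : FiniteDimensional ℂ (subCorner A p p)) :
    FiniteDimensional ℂ hp.Corner :=
  let ι : hp.Corner →ₗ[ℂ] subCorner A p p :=
    { toFun x := ⟨x.1, show p * x.1 * p = x.1 by rw [idem_mul_val, val_mul_idem]⟩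
      map_add' _ _ := rfl
      map_smul' _ _ := rfl }
  .of_injective ι fun _ _ h => Subtype.ext (Subtype.ext_iff.mp h :)

theorem isUnit_or_isNilpotent (hprim : IsPrimIdem A p)
    (h : FiniteDimensional ℂ (subCorner A p p)) (y : hp.Corner) : IsUnit y ∨ IsNilpotent y :=
  have := finiteDimensional h
  have : IsArtinianRing hp.Corner := isArtinian_of_tower ℂ inferInstance
  IsArtinianRing.isUnit_or_isNilpotent_of_forall_isIdempotentElem (eq_zero_or_one hprim) y

end IsIdempotentElem.Corner

section Orthogonalization

variable {R : Type*} [NonUnitalRing R] {e f t w : R}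

theorem exists_subIdem_idemEquiv_of_left_inv (he : IsIdem R e) (hft : f * t = t)
    (htf : t * f = t) (ht : t * (f * e * f) = f) :
    ∃ q : R, IsIdem R q ∧ SubIdem R q e ∧ IdemEquiv R f q := by
  have he' : e * e = e := he
  have hf : f * f = f := by
    calc f * f = f * (t * (f * e * f)) := by rw [ht]
      _ = f := by rw [← mul_assoc, hft, ht]
  set u := t * e
  set v := e * f
  have huv : u * v = f := by
    calc u * v = t * (e * e) * f := by simp only [u, v, mul_assoc]
      _ = t * f * e * f := by rw [he', htf]
      _ = t * (f * e * f) := by simp only [mul_assoc]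
      _ = f := ht
  have hvf : v * f = v := by simp only [v, mul_assoc, hf]
  have hfu : f * u = u := by simp only [u, ← mul_assoc, hft]
  have hq : IsIdem R (v * u) := by
    calc v * u * (v * u) = v * (u * v) * u := by simp only [mul_assoc]
      _ = v * u := by rw [huv, hvf]
  refine ⟨v * u, hq, ⟨?_, ?_⟩, u, v, ?_, ?_, huv, rfl⟩
  · simp only [u, mul_assoc, he']
  · simp only [v, ← mul_assoc, he']
  · rw [hfu, ← mul_assoc, huv, hfu]
  · rw [mul_assoc, hvf, mul_assoc, huv, hvf]

theorem exists_orthIdem_idemEquiv_of_right_inv (hf : IsIdem R f) (he : IsIdem R e)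
    (hfw : f * w = w) (hwf : w * f = w) (hw : (f - f * e * f) * w = f) :
    ∃ g : R, IdemEquiv R f g ∧ OrthIdem R g e ∧
      ∀ z : R, OrthIdem R z f → OrthIdem R z e → OrthIdem R z g := by
  have hf' : f * f = f := hf
  have he' : e * e = e := he
  set q := w - e * w
  have hfq : f * q = f := by
    calc f * q = (f - f * e * f) * w := by simp only [q, mul_sub, sub_mul, mul_assoc, hfw]
      _ = f := hw
  have hqf : q * f = q := by simp only [q, sub_mul, mul_assoc, hwf]
  have heq : e * q = 0 := by simp only [q, mul_sub, ← mul_assoc, he', sub_self]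
  have hqq : q * q = q := by
    calc q * q = q * f * q := by rw [hqf]
      _ = q := by rw [mul_assoc, hfq, hqf]
  set g := q - q * e
  have hge : g * e = 0 := by simp only [g, sub_mul, mul_assoc, he', sub_self]
  have heg : e * g = 0 := by simp only [g, mul_sub, ← mul_assoc, heq, zero_mul, sub_self]
  have hqg : q * g = g := by simp only [g, mul_sub, ← mul_assoc, hqq]
  have hgq : g * q = q := by simp only [g, sub_mul, mul_assoc, heq, mul_zero, sub_zero, hqq]
  have hgg : g * g = g := by
    calc g * g = q * g - q * (e * g) := by simp only [g, sub_mul, mul_assoc]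
      _ = g := by rw [hqg, heg, mul_zero, sub_zero]
  refine ⟨g, ⟨f * g, q, ?_, ?_, ?_, ?_⟩, ⟨hge, heg⟩, fun z ⟨hzf, hfz⟩ ⟨hze, hez⟩ => ?_⟩
  · rw [← mul_assoc, hf', mul_assoc, hgg]
  · rw [hgq, hqf]
  · rw [mul_assoc, hgq, hfq]
  · rw [← mul_assoc, hqf, hqg]
  have hzw : z * w = 0 := by rw [← hfw, ← mul_assoc, hzf, zero_mul]
  have hwz : w * z = 0 := by rw [← hwf, mul_assoc, hfz, mul_zero]
  have hzq : z * q = 0 := by simp only [q, mul_sub, hzw, ← mul_assoc, hze, zero_mul, sub_self]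
  have hqz : q * z = 0 := by simp only [q, sub_mul, hwz, mul_assoc, mul_zero, sub_self]
  constructor
  · simp only [g, mul_sub, hzq, ← mul_assoc, zero_mul, sub_self]
  · simp only [g, sub_mul, hqz, mul_assoc, hez, mul_zero, sub_self]

end Orthogonalization

theorem isGenIdem_sum_of_finset {R : Type*} [NonUnitalRing R] {F : Finset R}
    (hF : ∀ q ∈ F, IsPrimIdem R q) (hFo : (F : Set R).Pairwise (OrthIdem R))
    (hcov : ∀ p, IsPrimIdem R p → ∃ q ∈ F, IdemEquiv R p q) :
    ∃ e : R, IsGenIdem R e := by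
  let ε : Fin F.card → R := fun k => F.equivFin.symm k
  have hε : ∀ k l, k ≠ l → OrthIdem R (ε k) (ε l) := fun k l hkl =>
    hFo (F.equivFin.symm k).2 (F.equivFin.symm l).2 (by simpa [ε, Subtype.val_inj] using hkl)
  refine ⟨∑ k, ε k, isIdem_sum (fun k _ => (hF _ (F.equivFin.symm k).2).1)
    (fun k _ l _ hkl => (hε k l hkl).1), F.card, ε, fun k => hF _ (F.equivFin.symm k).2, hε, rfl,
    fun p hp => ?_⟩
  obtain ⟨q, hqF, hpq⟩ := hcov p hp
  exact ⟨F.equivFin ⟨q, hqF⟩, by simpa [ε] using hpq⟩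

namespace IsAUF

variable {A : Type*} [NonUnitalRing A] [Module ℂ A] [SMulCommClass ℂ A A] [IsScalarTower ℂ A A]

theorem exists_orthIdem_of_not_idemEquiv (hA : IsAUF A) {p e : A} (hp : IsPrimIdem A p)
    (he : IsPrimIdem A e) (hpe : ¬ IdemEquiv A p e) :
    ∃ p' : A, IsPrimIdem A p' ∧ IdemEquiv A p p' ∧ OrthIdem A p' e ∧
      ∀ z : A, OrthIdem A z p → OrthIdem A z e → OrthIdem A z p' := by
  let hpi : IsIdempotentElem p := hp.1
  let y : hpi.Corner := ⟨p * e * p, e, rfl⟩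
  rcases y.isUnit_or_isNilpotent hp (hA.finiteDimensional_subCorner p) with hy | hy
  · obtain ⟨t, ht⟩ := hy.exists_left_inv
    obtain ⟨q, hq, hqe, hpq⟩ := exists_subIdem_idemEquiv_of_left_inv he.1 t.idem_mul_val
      t.val_mul_idem (congrArg Subtype.val ht)
    rcases he.2.2 q hq hqe with rfl | rfl
    · exact absurd rfl (hpq.ne_zero hp.2.1)
    · exact absurd hpq hpe
  · obtain ⟨w, hw⟩ := hy.isUnit_one_sub.exists_right_inv
    obtain ⟨g, hpg, hge, hg⟩ := exists_orthIdem_idemEquiv_of_right_inv hp.1 he.1 w.idem_mul_val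
      w.val_mul_idem (congrArg Subtype.val hw)
    exact ⟨g, hp.of_idemEquiv hpg, hpg, hge, hg⟩

theorem exists_orthIdem_finset (hA : IsAUF A) {p : A} (hp : IsPrimIdem A p) (F : Finset A)
    (hF : ∀ q ∈ F, IsPrimIdem A q) (hFo : (F : Set A).Pairwise (OrthIdem A))
    (hpF : ∀ q ∈ F, ¬ IdemEquiv A p q) :
    ∃ p' : A, IsPrimIdem A p' ∧ IdemEquiv A p p' ∧ ∀ q ∈ F, OrthIdem A p' q := by
  classical
  induction F using Finset.induction_on with
  | empty => exact ⟨p, hp, .refl hp.1, by simp⟩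
  | insert a F haF ih =>
    simp only [Finset.mem_insert, forall_eq_or_imp, Finset.coe_insert] at hF hpF hFo ⊢
    obtain ⟨p₁, hp₁, hpp₁, hp₁F⟩ := ih hF.2 (hFo.mono (Set.subset_insert a _)) hpF.2
    obtain ⟨p', hp', hp₁p', hp'a, hp'F⟩ :=
      hA.exists_orthIdem_of_not_idemEquiv hp₁ hF.1 fun h => hpF.1 (hpp₁.trans hp.1 h)
    refine ⟨p', hp', hpp₁.trans hp.1 hp₁p', hp'a, fun q hq => (hp'F q (hp₁F q hq).symm ?_).symm⟩
    exact hFo (Set.mem_insert_of_mem a hq) (Set.mem_insert a _) (ne_of_mem_of_not_mem hq haF)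

theorem exists_orthogonal_primitive_cover (hA : IsAUF A) (S : Finset A)
    (hS : ∀ p ∈ S, IsPrimIdem A p) :
    ∃ F : Finset A, (∀ q ∈ F, IsPrimIdem A q) ∧ (F : Set A).Pairwise (OrthIdem A) ∧
      ∀ p ∈ S, ∃ q ∈ F, IdemEquiv A p q := by
  classical
  induction S using Finset.induction_on with
  | empty => exact ⟨∅, by simp, by simp, by simp⟩
  | insert a S _ ih =>
    simp only [Finset.mem_insert, forall_eq_or_imp] at hS ⊢
    obtain ⟨F, hF, hFo, hSF⟩ := ih hS.2
    by_cases ha : ∃ q ∈ F, IdemEquiv A a q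
    · exact ⟨F, hF, hFo, ha, hSF⟩
    simp only [not_exists, not_and] at ha
    obtain ⟨a', ha', haa', ha'F⟩ := hA.exists_orthIdem_finset hS.1 F hF hFo ha
    refine ⟨insert a' F, ?_, ?_, ⟨a', Finset.mem_insert_self _ _, haa'⟩, fun p hp => ?_⟩
    · simpa only [Finset.mem_insert, forall_eq_or_imp] using ⟨ha', hF⟩
    · rw [Finset.coe_insert, Set.pairwise_insert]
      exact ⟨hFo, fun q hq _ => ⟨ha'F q hq, (ha'F q hq).symm⟩⟩
    · obtain ⟨q, hq, hpq⟩ := hSF p hp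
      exact ⟨q, Finset.mem_insert_of_mem hq, hpq⟩

end IsAUF

/-- An AUF algebra has a generating idempotent iff its primitive idempotents
fall into finitely many equivalence classes. -/
theorem stmt_11 {A : Type u} [NonUnitalRing A] [Module ℂ A] [SMulCommClass ℂ A A]
    [IsScalarTower ℂ A A] (hA : IsAUF A) :
    (∃ e : A, IsGenIdem A e) ↔
    (∃ S : Finset A, (∀ p ∈ S, IsPrimIdem A p) ∧
      ∀ p : A, IsPrimIdem A p → ∃ q ∈ S, IdemEquiv A p q) := by
  classical
  constructor
  · rintro ⟨-, -, n, ε, hε, -, -, hcov⟩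
    refine ⟨Finset.univ.image ε, by simpa using hε, fun p hp => ?_⟩
    obtain ⟨k, hk⟩ := hcov p hp
    exact ⟨ε k, Finset.mem_image_of_mem ε (Finset.mem_univ k), hk⟩
  · rintro ⟨S, hS, hcov⟩
    obtain ⟨F, hF, hFo, hSF⟩ := hA.exists_orthogonal_primitive_cover S hS
    refine isGenIdem_sum_of_finset hF hFo fun p hp => ?_
    obtain ⟨q, hqS, hpq⟩ := hcov p hp
    obtain ⟨r, hrF, hqr⟩ := hSF q hqS
    exact ⟨r, hrF, hpq.trans hp.1 hqr⟩
end

section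
/- Let A be an associative ℂ-algebra (not necessarily unital), B a unital finite-dimensional ℂ-algebra, and M an A-B bimodule admitting a left coordinate system (α_i, α̌^i)_{i∈I}. Let p ∈ B be a generating idempotent of B. Then: (1) Mp = {ξp : ξ ∈ M} is an A-(pBp) bimodule admitting a left coordinate system; (2) for every symmetric linear functional φ on B, every left coordinate system (θ_j, θ̌^j)_{j∈J} of the A-(pBp) bimodule Mp, and every x ∈ A, one has Σ_{j∈J} φ(θ̌^j(x·θ_j(p))) = Σ_{i∈I} φ(α̌^i(x·α_i(1_B))) (both sums having only finitely many nonzero terms). -/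
open scoped BigOperators

universe u v w
section Stmt14

variable {A B M : Type*} [NonUnitalRing A] [Module ℂ A] [SMulCommClass ℂ A A]
  [IsScalarTower ℂ A A] [Ring B] [Algebra ℂ B] [AddCommGroup M] [Module ℂ M]

/-- The subspace `Mp = {ξ | ξ·p = ξ}` of fixed points of the right action of an
idempotent `p ∈ B`. -/
def rFix (ρ : BimoduleStr A B M) (p : B) : Submodule ℂ M where
  carrier := {ξ | ρ.r p ξ = ξ}
  add_mem' := by
    intro ξ η hξ hη
    simp only [Set.mem_setOf_eq] at *
    rw [map_add, hξ, hη]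
  zero_mem' := by simp
  smul_mem' := by
    intro c ξ hξ
    simp only [Set.mem_setOf_eq] at *
    rw [map_smul, hξ]

/-- The left action of `x ∈ A` restricted to `Mp`. -/
def lRes (ρ : BimoduleStr A B M) (p : B) (x : A) :
    ↥(rFix ρ p) →ₗ[ℂ] ↥(rFix ρ p) :=
  LinearMap.restrict (ρ.l x) (fun ξ hξ => by
    have h := LinearMap.ext_iff.1 (ρ.lr_comm x p) ξ
    simp only [LinearMap.comp_apply] at h
    show ρ.r p (ρ.l x ξ) = ρ.l x ξ
    rw [← h, show ρ.r p ξ = ξ from hξ])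

/-- `(θ j, θ̌ j)_{j : J}` is a left coordinate system of the `A`-`pBp` bimodule `Mp`. -/
def IsLeftCoordSysCorner (ρ : BimoduleStr A B M) (p : B) {J : Type w}
    (θ : J → (↥(subCorner B p p) →ₗ[ℂ] ↥(rFix ρ p)))
    (θv : J → (↥(rFix ρ p) →ₗ[ℂ] ↥(subCorner B p p))) : Prop :=
  -- each θ j is right pBp-linear
  (∀ (j : J) (b c : B) (hb : b ∈ subCorner B p p) (hc : c ∈ subCorner B p p)
      (hbc : b * c ∈ subCorner B p p),
    ((θ j ⟨b * c, hbc⟩ : M)) = ρ.r c ((θ j ⟨b, hb⟩ : M))) ∧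
  -- each θ̌ j is right pBp-linear
  (∀ (j : J) (ξ : M) (hξ : ξ ∈ rFix ρ p) (c : B) (hc : c ∈ subCorner B p p)
      (hrc : ρ.r c ξ ∈ rFix ρ p),
    ((θv j ⟨ρ.r c ξ, hrc⟩ : B)) = (θv j ⟨ξ, hξ⟩ : B) * c) ∧
  -- condition (a)
  (∀ ξ : ↥(rFix ρ p), {j | θv j ξ ≠ 0}.Finite ∧
    ∑ᶠ j, ((θ j (θv j ξ) : M)) = (ξ : M)) ∧
  -- condition (b)
  (∀ x : A, {j | (lRes ρ p x) ∘ₗ θ j ≠ 0}.Finite ∧ {j | θv j ∘ₗ (lRes ρ p x) ≠ 0}.Finite)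

end Stmt14

/-!
A generating idempotent `p` is full: decomposing `1` into primitive idempotents, each of
which is equivalent to a summand of `p`, gives `u_s ∈ Bp`, `v_s ∈ pB` with `∑ u_s v_s = 1`.
Then `θ_(i,s) = α_i (u_s ·)`, `θ̌_(i,s) = v_s α̌_i` is a left coordinate system of `Mp`, whose
trace `∑ φ (v_s α̌_i (x α_i 1) u_s)` collapses to `∑ φ (α̌_i (x α_i 1))` by symmetry of `φ`.
Finally the trace of `Mp` does not depend on the coordinate system: expanding one system in
another gives a double sum whose two orders of summation agree termwise, again by symmetry.
-/

open Function

theorem finsum_comm {α β N : Type*} [AddCommMonoid N] (f : α → β → N)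
    (hf : HasFiniteSupport (uncurry f)) :
    ∑ᶠ a, ∑ᶠ b, f a b = ∑ᶠ b, ∑ᶠ a, f a b := by
  have hf' : HasFiniteSupport (uncurry fun b a => f a b) := by
    refine (hf.image Prod.swap).subset fun ab hab => ⟨ab.swap, hab, rfl⟩
  calc ∑ᶠ a, ∑ᶠ b, f a b = ∑ᶠ ab : α × β, f ab.1 ab.2 := (finsum_curry _ hf).symm
    _ = ∑ᶠ ba : β × α, f ba.2 ba.1 := (finsum_comp_equiv (Equiv.prodComm β α)).symm
    _ = ∑ᶠ b, ∑ᶠ a, f a b := finsum_curry _ hf'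

section Idempotents

variable {R : Type*} [NonUnitalRing R]

theorem IsIdem.sub_of_subIdem {e f : R} (he : IsIdem R e) (hf : IsIdem R f)
    (hfe : SubIdem R f e) : IsIdem R (e - f) := by
  show (e - f) * (e - f) = e - f
  rw [sub_mul, mul_sub, mul_sub, he, hf, hfe.1, hfe.2]
  abel

theorem SubIdem.sub_left {e f : R} (he : IsIdem R e) (hfe : SubIdem R f e) :
    SubIdem R (e - f) e :=
  ⟨by rw [sub_mul, he, hfe.1], by rw [mul_sub, he, hfe.2]⟩

theorem subIdem_sum_of_orthIdem {ι : Type*} [Fintype ι] {ε : ι → R}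
    (hε : ∀ k, IsIdem R (ε k)) (horth : ∀ k l, k ≠ l → OrthIdem R (ε k) (ε l)) (k : ι) :
    SubIdem R (ε k) (∑ l, ε l) := by
  constructor
  · rw [Finset.mul_sum, Finset.sum_eq_single k (fun l _ hl => (horth k l hl.symm).1)
      (by simp)]
    exact hε k
  · rw [Finset.sum_mul, Finset.sum_eq_single k (fun l _ hl => (horth l k hl).1) (by simp)]
    exact hε k

theorem IdemEquiv.exists_mul_eq_of_subIdem {q e p : R} (hqe : IdemEquiv R q e)
    (hep : SubIdem R e p) : ∃ w z : R, w * p = w ∧ p * z = z ∧ w * z = q := by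
  obtain ⟨w, z, hw, hz, hwz, -⟩ := hqe
  refine ⟨w, z, ?_, ?_, hwz⟩
  · rw [← hw, mul_assoc, hep.1]
  · rw [← hz, ← mul_assoc, ← mul_assoc, hep.2]

end Idempotents

section Corners

variable {R : Type*} [NonUnitalRing R] [Module ℂ R] [SMulCommClass ℂ R R] [IsScalarTower ℂ R R]

theorem IsIdem.mem_subCorner {e : R} (he : IsIdem R e) : e ∈ subCorner R e e := by
  show e * e * e = e
  rw [he, he]

theorem IsIdem.mul_eq_of_mem_subCorner {e f b : R} (he : IsIdem R e)
    (hb : b ∈ subCorner R e f) : e * b = b := by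
  have hb' : e * b * f = b := hb
  rw [← hb', ← mul_assoc, ← mul_assoc, he]

theorem IsIdem.mul_eq_of_mem_subCorner' {e f b : R} (hf : IsIdem R f)
    (hb : b ∈ subCorner R e f) : b * f = b := by
  have hb' : e * b * f = b := hb
  rw [← hb', mul_assoc, hf]

theorem subCorner_lt_of_subIdem {e f : R} (he : IsIdem R e) (hf : IsIdem R f)
    (hfe : SubIdem R f e) (hne : f ≠ e) : subCorner R f f < subCorner R e e := by
  have hle : subCorner R f f ≤ subCorner R e e := fun b (hb : f * b * f = b) => by
    show e * b * e = b
    rw [← hb, show e * (f * b * f) * e = (e * f) * b * (f * e) by noncomm_ring, hfe.1, hfe.2]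
  refine lt_of_le_of_ne hle fun heq => hne ?_
  have he' : f * e * f = e := (heq ▸ he.mem_subCorner : e ∈ subCorner R f f)
  rwa [hfe.1, hf] at he'

variable [FiniteDimensional ℂ R]

/-- Splitting off a proper subidempotent shrinks the corner `fRf`, so this terminates. -/
theorem exists_list_isPrimIdem_sum_eq (f : R) (hf : IsIdem R f) :
    ∃ L : List R, (∀ g ∈ L, IsPrimIdem R g) ∧ L.sum = f := by
  induction hn : Module.finrank ℂ (subCorner R f f) using Nat.strong_induction_on
    generalizing f with
  | _ n ih =>
  by_cases hprim : IsPrimIdem R f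
  · exact ⟨[f], by simpa using hprim, by simp⟩
  by_cases h0 : f = 0
  · exact ⟨[], by simp, by simp [h0]⟩
  obtain ⟨g, hg, hgf, hg0, hne⟩ : ∃ g, IsIdem R g ∧ SubIdem R g f ∧ g ≠ 0 ∧ g ≠ f := by
    by_contra! hcon
    exact hprim ⟨hf, h0, fun g hg hgf => or_iff_not_imp_left.2 (hcon g hg hgf)⟩
  have hfg := hf.sub_of_subIdem hg hgf
  have hfgf := hgf.sub_left hf
  obtain ⟨L₁, hL₁, hs₁⟩ := ih _ (hn ▸ Submodule.finrank_lt_finrank_of_lt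
    (subCorner_lt_of_subIdem hf hg hgf hne)) g hg rfl
  obtain ⟨L₂, hL₂, hs₂⟩ := ih _ (hn ▸ Submodule.finrank_lt_finrank_of_lt
    (subCorner_lt_of_subIdem hf hfg hfgf (by simpa using hg0))) (f - g) hfg rfl
  refine ⟨L₁ ++ L₂, fun x hx => (List.mem_append.1 hx).elim (hL₁ x) (hL₂ x), ?_⟩
  rw [List.sum_append, hs₁, hs₂, add_sub_cancel]

end Corners

theorem IsGenIdem.exists_sum_mul_eq_one {B : Type*} [Ring B] [Algebra ℂ B]
    [FiniteDimensional ℂ B] {p : B} (hp : IsGenIdem B p) :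
    ∃ (m : ℕ) (u v : Fin m → B), (∀ s, u s * p = u s) ∧ (∀ s, p * v s = v s) ∧
      ∑ s, u s * v s = 1 := by
  obtain ⟨-, n, ε, hprim, horth, rfl, hgen⟩ := hp
  obtain ⟨L, hL, hsum⟩ := exists_list_isPrimIdem_sum_eq (1 : B) (one_mul 1)
  have hfactor : ∀ t : Fin L.length, ∃ w z : B,
      w * ∑ k, ε k = w ∧ (∑ k, ε k) * z = z ∧ w * z = L[(t : ℕ)] := fun t => by
    obtain ⟨k, hk⟩ := hgen _ (hL _ (L.getElem_mem t.isLt))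
    exact hk.exists_mul_eq_of_subIdem
      (subIdem_sum_of_orthIdem (fun k => (hprim k).1) horth k)
  choose u v hu hv huv using hfactor
  refine ⟨L.length, u, v, hu, hv, ?_⟩
  rw [Finset.sum_congr rfl fun t _ => huv t, Fin.sum_univ_getElem, hsum]

section Coordinates

variable {A B M : Type*} [NonUnitalRing A] [Module ℂ A] [Ring B] [Algebra ℂ B]
  [AddCommGroup M] [Module ℂ M] {ρ : BimoduleStr A B M}

theorem BimoduleStr.l_r_apply (ρ : BimoduleStr A B M) (x : A) (b : B) (ξ : M) :
    ρ.l x (ρ.r b ξ) = ρ.r b (ρ.l x ξ) :=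
  LinearMap.congr_fun (ρ.lr_comm x b) ξ

@[simp]
theorem lRes_coe (ρ : BimoduleStr A B M) (p : B) (x : A) (ξ : rFix ρ p) :
    (lRes ρ p x ξ : M) = ρ.l x ξ := rfl

namespace IsLeftCoordSys

variable {I : Type*} {α : I → (B →ₗ[ℂ] M)} {αv : I → (M →ₗ[ℂ] B)}
  (hα : IsLeftCoordSys ρ α αv)
include hα

theorem apply_mul (i : I) (b c : B) : α i (b * c) = ρ.r c (α i b) := hα.1 i b c

theorem coord_r (i : I) (ξ : M) (b : B) : αv i (ρ.r b ξ) = αv i ξ * b := hα.2.1 i ξ b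

theorem finite_coord_ne_zero (ξ : M) : {i | αv i ξ ≠ 0}.Finite := (hα.2.2.1 ξ).1

theorem finsum_apply (ξ : M) : ∑ᶠ i, α i (αv i ξ) = ξ := (hα.2.2.1 ξ).2

theorem finite_l_comp_ne_zero (x : A) : {i | ρ.l x ∘ₗ α i ≠ 0}.Finite := (hα.2.2.2 x).1

theorem finite_comp_l_ne_zero (x : A) : {i | αv i ∘ₗ ρ.l x ≠ 0}.Finite := (hα.2.2.2 x).2

theorem finite_apply_coord_l_ne_zero (φ : B →ₗ[ℂ] ℂ) (x : A) (f : I → M) :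
    {i | φ (αv i (ρ.l x (f i))) ≠ 0}.Finite :=
  (hα.finite_comp_l_ne_zero x).subset fun i hi h0 =>
    hi (by rw [show αv i (ρ.l x (f i)) = 0 from LinearMap.congr_fun h0 _, map_zero])

end IsLeftCoordSys

namespace IsLeftCoordSysCorner

variable {p : B} {J : Type*} {θ : J → (subCorner B p p →ₗ[ℂ] rFix ρ p)}
  {θv : J → (rFix ρ p →ₗ[ℂ] subCorner B p p)} (hθ : IsLeftCoordSysCorner ρ p θ θv)
include hθ

theorem apply_eq_r (hpq : IsIdem B p) (hpp : p ∈ subCorner B p p) (j : J)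
    (c : subCorner B p p) : (θ j c : M) = ρ.r c (θ j ⟨p, hpp⟩) := by
  have hpc : p * c = c := hpq.mul_eq_of_mem_subCorner c.2
  have := hθ.1 j p c hpp c.2 (by rw [hpc]; exact c.2)
  simpa only [hpc] using this

theorem coord_eq_mul (j : J) {ξ η : rFix ρ p} {c : subCorner B p p}
    (hη : (η : M) = ρ.r c ξ) : (θv j η : B) = θv j ξ * c := by
  obtain ⟨η, hηp⟩ := η
  subst hη
  exact hθ.2.1 j ξ ξ.2 c c.2 hηp

theorem hasFiniteSupport_apply (ξ : rFix ρ p) : HasFiniteSupport fun j => θ j (θv j ξ) :=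
  (hθ.2.2.1 ξ).1.subset fun j hj h0 => hj (by simp only [h0, map_zero])

theorem finsum_apply (ξ : rFix ρ p) : ∑ᶠ j, θ j (θv j ξ) = ξ := by
  apply Subtype.ext
  rw [← Submodule.subtype_apply, map_finsum _ (hθ.hasFiniteSupport_apply ξ)]
  exact (hθ.2.2.1 ξ).2

theorem finite_lRes_comp_ne_zero (x : A) : {j | lRes ρ p x ∘ₗ θ j ≠ 0}.Finite :=
  (hθ.2.2.2 x).1

theorem finite_comp_lRes_ne_zero (x : A) : {j | θv j ∘ₗ lRes ρ p x ≠ 0}.Finite :=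
  (hθ.2.2.2 x).2

theorem finite_apply_coord_lRes_ne_zero (φ : B →ₗ[ℂ] ℂ) (x : A) (f : J → rFix ρ p) :
    {j | φ (θv j (lRes ρ p x (f j))) ≠ 0}.Finite :=
  (hθ.finite_comp_lRes_ne_zero x).subset fun j hj h0 => hj (by
    rw [show θv j (lRes ρ p x (f j)) = 0 from LinearMap.congr_fun h0 _]
    simp)

end IsLeftCoordSysCorner

end Coordinates

section CornerTrace

variable {A B M : Type*} [NonUnitalRing A] [Module ℂ A] [Ring B] [Algebra ℂ B]
  [AddCommGroup M] [Module ℂ M] {ρ : BimoduleStr A B M} {p : B}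
  {J K : Type*} {θ : J → (subCorner B p p →ₗ[ℂ] rFix ρ p)}
  {θv : J → (rFix ρ p →ₗ[ℂ] subCorner B p p)} {σ : K → (subCorner B p p →ₗ[ℂ] rFix ρ p)}
  {σv : K → (rFix ρ p →ₗ[ℂ] subCorner B p p)} {φ : B →ₗ[ℂ] ℂ}

/-- With `c = σ̌ₖ(θⱼ p)` and `d = θ̌ⱼ(x σₖ p)`, the two sides are `φ (d * c)` and `φ (c * d)`. -/
theorem IsSLF.apply_coord_lRes_swap (hφ : IsSLF B φ) (hθ : IsLeftCoordSysCorner ρ p θ θv)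
    (hσ : IsLeftCoordSysCorner ρ p σ σv) (hpq : IsIdem B p) (hpp : p ∈ subCorner B p p)
    (x : A) (j : J) (k : K) :
    φ (θv j (lRes ρ p x (σ k (σv k (θ j ⟨p, hpp⟩))))) =
      φ (σv k (θ j (θv j (lRes ρ p x (σ k ⟨p, hpp⟩))))) := by
  set c := σv k (θ j ⟨p, hpp⟩)
  set d := θv j (lRes ρ p x (σ k ⟨p, hpp⟩))
  have hdc : (θv j (lRes ρ p x (σ k c)) : B) = d * c := hθ.coord_eq_mul j (by
    rw [lRes_coe, hσ.apply_eq_r hpq hpp, ρ.l_r_apply, lRes_coe])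
  have hcd : (σv k (θ j d) : B) = c * d := hσ.coord_eq_mul k (hθ.apply_eq_r hpq hpp j d)
  rw [hdc, hcd]
  exact hφ d c

theorem IsLeftCoordSysCorner.finsum_slf_eq (hφ : IsSLF B φ)
    (hθ : IsLeftCoordSysCorner ρ p θ θv) (hσ : IsLeftCoordSysCorner ρ p σ σv)
    (hpq : IsIdem B p) (hpp : p ∈ subCorner B p p) (x : A) :
    ∑ᶠ j, φ (θv j (lRes ρ p x (θ j ⟨p, hpp⟩))) =
      ∑ᶠ k, φ (σv k (lRes ρ p x (σ k ⟨p, hpp⟩))) := by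
  set F : J → K → ℂ := fun j k => φ (σv k (θ j (θv j (lRes ρ p x (σ k ⟨p, hpp⟩)))))
  have hF : HasFiniteSupport (uncurry F) := by
    refine ((hθ.finite_comp_lRes_ne_zero x).prod (hσ.finite_lRes_comp_ne_zero x)).subset ?_
    rintro ⟨j, k⟩ hjk
    have hne : θv j (lRes ρ p x (σ k ⟨p, hpp⟩)) ≠ 0 := fun h0 => hjk (by simp [F, h0])
    exact ⟨fun h0 => hne (LinearMap.congr_fun h0 _),
      fun h0 => hne (by rw [show lRes ρ p x (σ k ⟨p, hpp⟩) = 0 from LinearMap.congr_fun h0 _,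
        map_zero])⟩
  calc ∑ᶠ j, φ (θv j (lRes ρ p x (θ j ⟨p, hpp⟩)))
      = ∑ᶠ j, ∑ᶠ k, F j k := finsum_congr fun j => by
        conv_lhs => rw [← hσ.finsum_apply (θ j ⟨p, hpp⟩)]
        refine (map_finsum (φ ∘ₗ (subCorner B p p).subtype ∘ₗ θv j ∘ₗ lRes ρ p x)
          (hσ.hasFiniteSupport_apply _)).trans (finsum_congr fun k => ?_)
        exact hφ.apply_coord_lRes_swap hθ hσ hpq hpp x j k
    _ = ∑ᶠ k, ∑ᶠ j, F j k := finsum_comm F hF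
    _ = ∑ᶠ k, φ (σv k (lRes ρ p x (σ k ⟨p, hpp⟩))) := finsum_congr fun k => by
        rw [← hθ.finsum_apply (lRes ρ p x (σ k ⟨p, hpp⟩))]
        exact (map_finsum (φ ∘ₗ (subCorner B p p).subtype ∘ₗ σv k)
          (hθ.hasFiniteSupport_apply _)).symm

end CornerTrace

section CornerCoord

variable {A B M : Type*} [NonUnitalRing A] [Module ℂ A] [Ring B] [Algebra ℂ B]
  [AddCommGroup M] [Module ℂ M] (ρ : BimoduleStr A B M) {p : B} {I : Type*}
  {α : I → (B →ₗ[ℂ] M)} {αv : I → (M →ₗ[ℂ] B)} {m : ℕ}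

def cornerCoord (hα : ∀ i b c, α i (b * c) = ρ.r c (α i b)) (hpq : IsIdem B p)
    (u : Fin m → B) (k : I × Fin m) : subCorner B p p →ₗ[ℂ] rFix ρ p :=
  (α k.1 ∘ₗ LinearMap.mulLeft ℂ (u k.2) ∘ₗ (subCorner B p p).subtype).codRestrict _
    fun b => by
      show ρ.r p (α k.1 (u k.2 * b)) = α k.1 (u k.2 * b)
      rw [← hα, mul_assoc, hpq.mul_eq_of_mem_subCorner' b.2]

def cornerCoordDual (hαv : ∀ i ξ b, αv i (ρ.r b ξ) = αv i ξ * b) {v : Fin m → B}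
    (hv : ∀ s, p * v s = v s) (k : I × Fin m) : rFix ρ p →ₗ[ℂ] subCorner B p p :=
  (LinearMap.mulLeft ℂ (v k.2) ∘ₗ αv k.1 ∘ₗ (rFix ρ p).subtype).codRestrict _
    fun ξ => by
      show p * (v k.2 * αv k.1 ξ) * p = v k.2 * αv k.1 ξ
      rw [← mul_assoc, hv, mul_assoc, ← hαv, ξ.2]

variable {ρ} {u v : Fin m → B}

@[simp]
theorem cornerCoord_apply (hα : ∀ i b c, α i (b * c) = ρ.r c (α i b)) (hpq : IsIdem B p)
    (u : Fin m → B) (k : I × Fin m) (b : subCorner B p p) :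
    (cornerCoord ρ hα hpq u k b : M) = α k.1 (u k.2 * b) := rfl

@[simp]
theorem cornerCoordDual_apply (hαv : ∀ i ξ b, αv i (ρ.r b ξ) = αv i ξ * b)
    (hv : ∀ s, p * v s = v s) (k : I × Fin m) (ξ : rFix ρ p) :
    (cornerCoordDual ρ hαv hv k ξ : B) = v k.2 * αv k.1 ξ := rfl

variable (hα : IsLeftCoordSys ρ α αv) (hpq : IsIdem B p) (hv : ∀ s, p * v s = v s)
include hα

theorem finsum_cornerCoord_apply (huv : ∑ s, u s * v s = 1) (ξ : rFix ρ p) :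
    ∑ᶠ k, (cornerCoord ρ hα.apply_mul hpq u k (cornerCoordDual ρ hα.coord_r hv k ξ) : M) =
      ξ := by
  have hfin : HasFiniteSupport fun k : I × Fin m =>
      (cornerCoord ρ hα.apply_mul hpq u k (cornerCoordDual ρ hα.coord_r hv k ξ) : M) :=
    ((hα.finite_coord_ne_zero ξ).prod Set.finite_univ).subset fun k hk =>
      ⟨fun h0 => hk (by simp [h0]), trivial⟩
  rw [finsum_curry _ hfin]
  conv_rhs => rw [← hα.finsum_apply ξ]
  refine finsum_congr fun i => ?_
  simp only [cornerCoord_apply, cornerCoordDual_apply, finsum_eq_sum_of_fintype, ← map_sum,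
    ← mul_assoc, ← Finset.sum_mul, huv, one_mul]

theorem isLeftCoordSysCorner_cornerCoord (huv : ∑ s, u s * v s = 1) :
    IsLeftCoordSysCorner ρ p (cornerCoord ρ hα.apply_mul hpq u)
      (cornerCoordDual ρ hα.coord_r hv) := by
  refine ⟨fun k b c _ _ _ => ?_, fun k ξ _ c _ _ => ?_, fun ξ => ⟨?_, ?_⟩, fun x => ⟨?_, ?_⟩⟩
  · simp only [cornerCoord_apply, ← mul_assoc, hα.apply_mul]
  · simp only [cornerCoordDual_apply, hα.coord_r, mul_assoc]
  · refine ((hα.finite_coord_ne_zero ξ).prod Set.finite_univ).subset fun k hk =>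
      ⟨fun h0 => hk (Subtype.ext ?_), trivial⟩
    simp [h0]
  · exact finsum_cornerCoord_apply hα hpq hv huv ξ
  · refine ((hα.finite_l_comp_ne_zero x).prod Set.finite_univ).subset fun k hk =>
      ⟨fun h0 => hk (LinearMap.ext fun b => Subtype.ext ?_), trivial⟩
    exact LinearMap.congr_fun h0 (u k.2 * b)
  · refine ((hα.finite_comp_l_ne_zero x).prod Set.finite_univ).subset fun k hk =>
      ⟨fun h0 => hk (LinearMap.ext fun ξ => Subtype.ext ?_), trivial⟩
    simp [show αv k.1 (ρ.l x ξ) = 0 from LinearMap.congr_fun h0 _]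

theorem finsum_slf_cornerCoord (hu : ∀ s, u s * p = u s) (hpp : p ∈ subCorner B p p)
    (huv : ∑ s, u s * v s = 1) {φ : B →ₗ[ℂ] ℂ} (hφ : IsSLF B φ) (x : A) :
    ∑ᶠ k, φ (cornerCoordDual ρ hα.coord_r hv k
        (lRes ρ p x (cornerCoord ρ hα.apply_mul hpq u k ⟨p, hpp⟩))) =
      ∑ᶠ i, φ (αv i (ρ.l x (α i 1))) := by
  have hterm : ∀ k : I × Fin m, φ (cornerCoordDual ρ hα.coord_r hv k
      (lRes ρ p x (cornerCoord ρ hα.apply_mul hpq u k ⟨p, hpp⟩))) =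
        φ (αv k.1 (ρ.l x (α k.1 1)) * (u k.2 * v k.2)) := fun k => by
    have hαu : α k.1 (u k.2 * p) = ρ.r (u k.2) (α k.1 1) := by
      rw [hu, ← hα.apply_mul, one_mul]
    simp only [cornerCoordDual_apply, lRes_coe, cornerCoord_apply, hαu, ρ.l_r_apply,
      hα.coord_r]
    rw [hφ, mul_assoc]
  have hfin : HasFiniteSupport fun k : I × Fin m =>
      φ (αv k.1 (ρ.l x (α k.1 1)) * (u k.2 * v k.2)) :=
    ((hα.finite_comp_l_ne_zero x).prod Set.finite_univ).subset fun k hk =>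
      ⟨fun h0 => hk (by simp [show αv k.1 (ρ.l x (α k.1 1)) = 0 from
        LinearMap.congr_fun h0 _]), trivial⟩
  rw [finsum_congr hterm, finsum_curry _ hfin]
  simp only [finsum_eq_sum_of_fintype, ← map_sum, ← Finset.mul_sum, huv, mul_one]

end CornerCoord

theorem stmt_14_general {A B M : Type*} [NonUnitalRing A] [Module ℂ A]
    [Ring B] [Algebra ℂ B] [FiniteDimensional ℂ B]
    [AddCommGroup M] [Module ℂ M]
    (ρ : BimoduleStr A B M) {I : Type v}
    (α : I → (B →ₗ[ℂ] M)) (αv : I → (M →ₗ[ℂ] B)) (hα : IsLeftCoordSys ρ α αv)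
    (p : B) (hp : IsGenIdem B p) (hpp : p ∈ subCorner B p p) :
    (∃ (J : Type v) (θ : J → (↥(subCorner B p p) →ₗ[ℂ] ↥(rFix ρ p)))
        (θv : J → (↥(rFix ρ p) →ₗ[ℂ] ↥(subCorner B p p))),
      IsLeftCoordSysCorner ρ p θ θv) ∧
    (∀ φ : B →ₗ[ℂ] ℂ, IsSLF B φ →
      ∀ {J : Type w} (θ : J → (↥(subCorner B p p) →ₗ[ℂ] ↥(rFix ρ p)))
        (θv : J → (↥(rFix ρ p) →ₗ[ℂ] ↥(subCorner B p p))),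
        IsLeftCoordSysCorner ρ p θ θv → ∀ x : A,
        {j | φ ((θv j (lRes ρ p x (θ j ⟨p, hpp⟩)) : B)) ≠ 0}.Finite ∧
        {i | φ (αv i (ρ.l x (α i 1))) ≠ 0}.Finite ∧
        ∑ᶠ j, φ ((θv j (lRes ρ p x (θ j ⟨p, hpp⟩)) : B))
          = ∑ᶠ i, φ (αv i (ρ.l x (α i 1)))) := by
  obtain ⟨m, u, v, hu, hv, huv⟩ := hp.exists_sum_mul_eq_one
  have hcoord := isLeftCoordSysCorner_cornerCoord hα hp.1 hv huv
  refine ⟨⟨_, _, _, hcoord⟩, fun φ hφ J θ θv hθ x =>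
    ⟨hθ.finite_apply_coord_lRes_ne_zero φ x _, hα.finite_apply_coord_l_ne_zero φ x _, ?_⟩⟩
  rw [hθ.finsum_slf_eq hφ hcoord hp.1 hpp x, finsum_slf_cornerCoord hα hp.1 hv hu hpp huv hφ x]

/-- Let `M` be an `A`-`B` bimodule with a left coordinate system, `B` unital
finite-dimensional, and `p ∈ B` a generating idempotent.  Then (1) the `A`-`pBp` bimodule
`Mp` has a left coordinate system, and (2) for every symmetric linear functional `φ` on `B`,
every left coordinate system of `Mp`, and every `x ∈ A`, the pseudotrace of `x` computed from
`φ|_{pBp}` and `Mp` equals the pseudotrace computed from `φ` and `M`. -/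
theorem stmt_14 {A B M : Type*} [NonUnitalRing A] [Module ℂ A] [SMulCommClass ℂ A A]
    [IsScalarTower ℂ A A] [Ring B] [Algebra ℂ B] [FiniteDimensional ℂ B]
    [AddCommGroup M] [Module ℂ M]
    (ρ : BimoduleStr A B M) {I : Type v}
    (α : I → (B →ₗ[ℂ] M)) (αv : I → (M →ₗ[ℂ] B)) (hα : IsLeftCoordSys ρ α αv)
    (p : B) (hp : IsGenIdem B p) (hpp : p ∈ subCorner B p p) :
    (∃ (J : Type v) (θ : J → (↥(subCorner B p p) →ₗ[ℂ] ↥(rFix ρ p)))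
        (θv : J → (↥(rFix ρ p) →ₗ[ℂ] ↥(subCorner B p p))),
      IsLeftCoordSysCorner ρ p θ θv) ∧
    (∀ φ : B →ₗ[ℂ] ℂ, IsSLF B φ →
      ∀ {J : Type w} (θ : J → (↥(subCorner B p p) →ₗ[ℂ] ↥(rFix ρ p)))
        (θv : J → (↥(rFix ρ p) →ₗ[ℂ] ↥(subCorner B p p))),
        IsLeftCoordSysCorner ρ p θ θv → ∀ x : A,
        {j | φ ((θv j (lRes ρ p x (θ j ⟨p, hpp⟩)) : B)) ≠ 0}.Finite ∧
        {i | φ (αv i (ρ.l x (α i 1))) ≠ 0}.Finite ∧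
        ∑ᶠ j, φ ((θv j (lRes ρ p x (θ j ⟨p, hpp⟩)) : B))
          = ∑ᶠ i, φ (αv i (ρ.l x (α i 1)))) :=
  stmt_14_general ρ α αv hα p hp hpp
end
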